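/- arXiv:2604.14081 — 15 statements merged into one kernel-verified Lean document; each statement's English description precedes it below -/
import Mathlib

section
/- Let 1 ≤ q < n be integers and set N = 2^n, K = 2^q, M = 2^{n-q}. Work in ℂ^N with standard basis indexed by pairs (u,v) ∈ Fin K × Fin M; for u ∈ Fin K the block u is {(u,v) : v ∈ Fin M}. Let φ be the uniform superposition (every coordinate 1/√N), fix a target (t*,t'), let U flip the sign of the coordinate at (t*,t') and fix all other basis vectors, let D ψ = 2⟨φ,ψ⟩φ − ψ, and let G = D ∘ U. Set λ = arcsin(1/√N) and λ' = arcsin(1/√M). For natural numbers j₁, j₂ define g_t = sin((2j₁+1)λ)·cos(2j₂λ') + (√(M−1)/√(N−1))·cos((2j₁+1)λ)·sin(2j₂λ') and b_t = −sin((2j₁+1)λ)·sin(2j₂λ') + (√(M−1)/√(N−1))·cos((2j₁+1)λ)·cos(2j₂λ'). Let ψ₂ ∈ ℂ^N be the vector whose coordinate at (t*,t') is g_t, whose coordinate at (t*,v) for v ≠ t' is b_t/√(M−1), and whose coordinate at (u,v) for u ≠ t* is cos((2j₁+1)λ)/√(N−1). If (N/√(N−1))·(1/K − 1/2)·cos((2j₁+1)λ)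 = −g_t + b_t·√(M−1), then every coordinate of G ψ₂ at an index (u,v) with u ≠ t* equals 0. -/
/-!
The oracle leaves `ψ₂` equal to `c = cos((2j₁+1)λ)/√(N-1)` on every non-target block, and the
diffusion acts there as `x ↦ 2·mean - x`. Summing `U ψ₂` block by block gives
`-g_t + (M-1)·b_t/√(M-1) + (K-1)·M·c`; by the cancellation condition and `N = K·M` this is
`N·c/2`, so the mean is `c/2` and the non-target amplitudes become `2·(c/2) - c = 0`.
-/

open Real Finset

section BlockSums

variable {R : Type*} [CommRing R] {ι κ : Type*} [Fintype ι] [Fintype κ] [DecidableEq ι]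
  [DecidableEq κ]

theorem Fintype.sum_ite_eq_const (t : ι) (x y : R) :
    ∑ a, (if a = t then x else y) = x + ((Fintype.card ι : R) - 1) * y := by
  rw [Finset.sum_ite, Finset.filter_eq', Finset.filter_ne', if_pos (Finset.mem_univ t),
    Finset.sum_singleton, Finset.sum_const, Finset.card_erase_of_mem (Finset.mem_univ t),
    Finset.card_univ, nsmul_eq_mul, Nat.cast_pred (Fintype.card_pos_iff.mpr ⟨t⟩)]

theorem sum_prod_eq_of_block (t : ι) (s : κ) (x y z : R) (ψ : ι × κ → R)
    (hψ : ∀ u v, ψ (u, v) = if u = t then (if v = s then x else y) else z) :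
    ∑ i, ψ i = x + ((Fintype.card κ : R) - 1) * y +
      ((Fintype.card ι : R) - 1) * ((Fintype.card κ : R) * z) := by
  have hrow : ∀ u, ∑ v, ψ (u, v) =
      if u = t then x + ((Fintype.card κ : R) - 1) * y else (Fintype.card κ : R) * z := by
    intro u
    simp only [hψ]
    split_ifs
    · exact Fintype.sum_ite_eq_const s x y
    · rw [Finset.sum_const, Finset.card_univ, nsmul_eq_mul]
  rw [Fintype.sum_prod_type, Finset.sum_congr rfl fun u _ => hrow u, Fintype.sum_ite_eq_const]

end BlockSums

theorem reflection_about_uniform_apply {ι : Type*} [Fintype ι] (N : ℕ) (φ ψ : ι → ℂ)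
    (hφ : ∀ i, φ i = ((1 / Real.sqrt N : ℝ) : ℂ)) (i : ι) :
    2 * (∑ j, (starRingEnd ℂ) (φ j) * ψ j) * φ i - ψ i = 2 / N * ∑ j, ψ j - ψ i := by
  have hsq : ((1 / Real.sqrt N : ℝ) : ℂ) * ((1 / Real.sqrt N : ℝ) : ℂ) = 1 / N := by
    rw [← Complex.ofReal_mul, div_mul_div_comm, one_mul, Real.mul_self_sqrt (Nat.cast_nonneg N)]
    push_cast
    rfl
  simp only [hφ, Complex.conj_ofReal, ← Finset.mul_sum]
  linear_combination 2 * (∑ j, ψ j) * hsq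

theorem two_div_mul_add_sub_eq_zero {F : Type*} [Field F] [CharZero F] {K M e c : F} (hK : K ≠ 0)
    (hM : M ≠ 0) (he : e = K * M * (1 / K - 1 / 2) * c) :
    2 / (K * M) * (e + (K - 1) * (M * c)) - c = 0 := by
  subst he
  field_simp
  ring

theorem stmt_0_general (n q : ℕ) (hqn : q < n)
    (N K M : ℕ) (hN : N = 2 ^ n) (hK : K = 2 ^ q) (hM : M = 2 ^ (n - q))
    -- the uniform superposition
    (φ : Fin K × Fin M → ℂ) (hφ : ∀ i, φ i = (1 / Real.sqrt N : ℝ))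
    -- the target
    (tstar : Fin K) (t' : Fin M)
    -- the sign-flip oracle
    (U : (Fin K × Fin M → ℂ) → (Fin K × Fin M → ℂ))
    (hU : ∀ ψ i, U ψ i = if i = (tstar, t') then -ψ i else ψ i)
    -- the diffusion operator D ψ = 2⟨φ,ψ⟩φ − ψ
    (D : (Fin K × Fin M → ℂ) → (Fin K × Fin M → ℂ))
    (hD : ∀ ψ i, D ψ i = 2 * (∑ j, (starRingEnd ℂ) (φ j) * ψ j) * φ i - ψ i)
    -- the Grover iterate
    (G : (Fin K × Fin M → ℂ) → (Fin K × Fin M → ℂ)) (hG : G = D ∘ U)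
    -- the angles
    (lam : ℝ)
    (j₁ : ℕ)
    -- the amplitudes
    (gt bt : ℝ)
    -- the state ψ₂ before the last global Grover iteration
    (ψ₂ : Fin K × Fin M → ℂ)
    (hψ₂ : ∀ u v, ψ₂ (u, v) =
      if u = tstar then
        (if v = t' then (gt : ℂ) else ((bt / Real.sqrt ((M : ℝ) - 1) : ℝ) : ℂ))
      else ((Real.cos ((2 * j₁ + 1) * lam) / Real.sqrt ((N : ℝ) - 1) : ℝ) : ℂ))
    -- the cancellation condition
    (hcond : (N / Real.sqrt ((N : ℝ) - 1)) * (1 / K - 1 / 2) *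
        Real.cos ((2 * j₁ + 1) * lam) = -gt + bt * Real.sqrt ((M : ℝ) - 1)) :
    ∀ u v, u ≠ tstar → G ψ₂ (u, v) = 0 := by
  intro u v hu
  set c : ℝ := Real.cos ((2 * j₁ + 1) * lam) / Real.sqrt ((N : ℝ) - 1)
  set d : ℝ := bt / Real.sqrt ((M : ℝ) - 1)
  have hUψ₂ : ∀ a b, U ψ₂ (a, b) =
      if a = tstar then (if b = t' then -(gt : ℂ) else (d : ℂ)) else (c : ℂ) := by
    intro a b
    rw [hU, hψ₂]
    by_cases ha : a = tstar <;> by_cases hb : b = t' <;> simp [ha, hb]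
  have hKM : (K : ℂ) * M = N := by
    rw [hN, hK, hM]
    push_cast
    rw [← pow_add, Nat.add_sub_cancel' hqn.le]
  -- `x / √x = √x` holds for every real `x` (both sides are junk `0` when `x ≤ 0`).
  have hcond' : -gt + ((M : ℝ) - 1) * d = N * (1 / K - 1 / 2) * c := by
    rw [mul_div_left_comm, Real.div_sqrt, ← hcond]
    ring
  have hcondℂ : -(gt : ℂ) + ((M : ℂ) - 1) * d = K * M * (1 / K - 1 / 2) * c := by
    rw [hKM]
    simpa using congrArg (fun x : ℝ => (x : ℂ)) hcond'
  rw [hG, Function.comp_apply, hD, reflection_about_uniform_apply N φ _ hφ,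
    sum_prod_eq_of_block tstar t' _ _ _ _ hUψ₂, hUψ₂, if_neg hu, Fintype.card_fin,
    Fintype.card_fin, ← hKM]
  exact two_div_mul_add_sub_eq_zero (Nat.cast_ne_zero.mpr (by rw [hK]; positivity))
    (Nat.cast_ne_zero.mpr (by rw [hM]; positivity)) hcondℂ

/-- Proposition 1 of the paper: cancellation of the non-target blocks in the GRK
quantum partial search algorithm. -/
theorem stmt_0 (n q : ℕ) (hq : 1 ≤ q) (hqn : q < n)
    (N K M : ℕ) (hN : N = 2 ^ n) (hK : K = 2 ^ q) (hM : M = 2 ^ (n - q))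
    -- the uniform superposition
    (φ : Fin K × Fin M → ℂ) (hφ : ∀ i, φ i = (1 / Real.sqrt N : ℝ))
    -- the target
    (tstar : Fin K) (t' : Fin M)
    -- the sign-flip oracle
    (U : (Fin K × Fin M → ℂ) → (Fin K × Fin M → ℂ))
    (hU : ∀ ψ i, U ψ i = if i = (tstar, t') then -ψ i else ψ i)
    -- the diffusion operator D ψ = 2⟨φ,ψ⟩φ − ψ
    (D : (Fin K × Fin M → ℂ) → (Fin K × Fin M → ℂ))
    (hD : ∀ ψ i, D ψ i = 2 * (∑ j, (starRingEnd ℂ) (φ j) * ψ j) * φ i - ψ i)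
    -- the Grover iterate
    (G : (Fin K × Fin M → ℂ) → (Fin K × Fin M → ℂ)) (hG : G = D ∘ U)
    -- the angles
    (lam lam' : ℝ)
    (hlam : lam = Real.arcsin (1 / Real.sqrt N))
    (hlam' : lam' = Real.arcsin (1 / Real.sqrt M))
    (j₁ j₂ : ℕ)
    -- the amplitudes
    (gt bt : ℝ)
    (hgt : gt = Real.sin ((2 * j₁ + 1) * lam) * Real.cos (2 * j₂ * lam') +
        Real.sqrt ((M : ℝ) - 1) / Real.sqrt ((N : ℝ) - 1) *
          Real.cos ((2 * j₁ + 1) * lam) * Real.sin (2 * j₂ * lam'))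
    (hbt : bt = -(Real.sin ((2 * j₁ + 1) * lam) * Real.sin (2 * j₂ * lam')) +
        Real.sqrt ((M : ℝ) - 1) / Real.sqrt ((N : ℝ) - 1) *
          Real.cos ((2 * j₁ + 1) * lam) * Real.cos (2 * j₂ * lam'))
    -- the state ψ₂ before the last global Grover iteration
    (ψ₂ : Fin K × Fin M → ℂ)
    (hψ₂ : ∀ u v, ψ₂ (u, v) =
      if u = tstar then
        (if v = t' then (gt : ℂ) else ((bt / Real.sqrt ((M : ℝ) - 1) : ℝ) : ℂ))
      else ((Real.cos ((2 * j₁ + 1) * lam) / Real.sqrt ((N : ℝ) - 1) : ℝ) : ℂ))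
    -- the cancellation condition
    (hcond : (N / Real.sqrt ((N : ℝ) - 1)) * (1 / K - 1 / 2) *
        Real.cos ((2 * j₁ + 1) * lam) = -gt + bt * Real.sqrt ((M : ℝ) - 1)) :
    ∀ u v, u ≠ tstar → G ψ₂ (u, v) = 0 :=
  stmt_0_general n q hqn N K M hN hK hM φ hφ tstar t' U hU D hD G hG lam j₁ gt bt ψ₂ hψ₂ hcond
end

section
/- For every real x > 2, letting β = arcsin(√(x/(4(x−1)))), one has 2·√x·sin(2β)/(x − 4·sin²β) = √(3x−4)/(x−2). Consequently, for every integer q ≥ 2, setting α_q = (√(2^q)/2)·arctan(√(3·2^q − 4)/(2^q − 2)) and β_q = arcsin(√(2^q/(4(2^q − 1)))), one has tan(2α_q/√(2^q)) = 2·√(2^q)·sin(2β_q)/(2^q − 4·sin²β_q). -/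
open Real

lemma sin_arcsin_sqrt {t : ℝ} (h : t ≤ 1) : sin (arcsin √t) = √t :=
  sin_arcsin (by linarith [sqrt_nonneg t]) (sqrt_le_one.mpr h)

lemma sin_sq_arcsin_sqrt {t : ℝ} (h0 : 0 ≤ t) (h1 : t ≤ 1) : sin (arcsin √t) ^ 2 = t := by
  rw [sin_arcsin_sqrt h1, sq_sqrt h0]

lemma sin_two_mul_arcsin_sqrt {t : ℝ} (h0 : 0 ≤ t) (h1 : t ≤ 1) :
    sin (2 * arcsin √t) = 2 * √(t * (1 - t)) := by
  rw [sin_two_mul, sin_arcsin_sqrt h1, cos_arcsin, sq_sqrt h0, sqrt_mul h0, mul_assoc]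

lemma two_mul_sqrt_mul_sin_two_mul_arcsin_div {x : ℝ} (hx : 2 < x) :
    2 * √x * sin (2 * arcsin √(x / (4 * (x - 1)))) /
        (x - 4 * sin (arcsin √(x / (4 * (x - 1)))) ^ 2)
      = √(3 * x - 4) / (x - 2) := by
  have hx1 : 0 < x - 1 := by linarith
  have hx2 : 0 < x - 2 := by linarith
  set t := x / (4 * (x - 1)) with ht
  have ht0 : 0 ≤ t := by positivity
  have ht1 : t ≤ 1 := by rw [ht, div_le_one (by positivity)]; linarith
  have hnum : √x * √(t * (1 - t)) = t * √(3 * x - 4) := by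
    have hprod : x * (t * (1 - t)) = t ^ 2 * (3 * x - 4) := by rw [ht]; field_simp; ring
    rw [← sqrt_mul (by linarith), hprod, sqrt_mul' _ (by linarith), sqrt_sq ht0]
  have hden : x - 4 * t = x * (x - 2) / (x - 1) := by rw [ht]; field_simp; ring
  rw [sin_two_mul_arcsin_sqrt ht0 ht1, sin_sq_arcsin_sqrt ht0 ht1,
    show 2 * √x * (2 * √(t * (1 - t))) = 4 * (√x * √(t * (1 - t))) by ring, hnum, hden, ht]
  field_simp

theorem stmt_1 :
    (∀ x : ℝ, 2 < x →
      2 * Real.sqrt x * Real.sin (2 * Real.arcsin (Real.sqrt (x / (4 * (x - 1))))) /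
          (x - 4 * Real.sin (Real.arcsin (Real.sqrt (x / (4 * (x - 1))))) ^ 2)
        = Real.sqrt (3 * x - 4) / (x - 2)) ∧
    (∀ q : ℕ, 2 ≤ q →
      Real.tan (2 * ((Real.sqrt (2 ^ q) / 2) *
            Real.arctan (Real.sqrt (3 * 2 ^ q - 4) / ((2 : ℝ) ^ q - 2))) / Real.sqrt (2 ^ q))
        = 2 * Real.sqrt (2 ^ q) *
              Real.sin (2 * Real.arcsin (Real.sqrt ((2 : ℝ) ^ q / (4 * ((2 : ℝ) ^ q - 1))))) /
            ((2 : ℝ) ^ q -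
              4 * Real.sin (Real.arcsin (Real.sqrt ((2 : ℝ) ^ q / (4 * ((2 : ℝ) ^ q - 1))))) ^ 2)) := by
  refine ⟨fun x hx => two_mul_sqrt_mul_sin_two_mul_arcsin_div hx, fun q hq => ?_⟩
  have h2q : (2 : ℝ) < 2 ^ q :=
    lt_of_lt_of_le (by norm_num) (pow_le_pow_right₀ (by norm_num : (1 : ℝ) ≤ 2) hq)
  have hsqrt : √((2 : ℝ) ^ q) ≠ 0 := by positivity
  have hangle : 2 * (√((2 : ℝ) ^ q) / 2 * arctan (√(3 * 2 ^ q - 4) / (2 ^ q - 2))) / √(2 ^ q)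
      = arctan (√(3 * 2 ^ q - 4) / (2 ^ q - 2)) := by
    field_simp
  rw [hangle, tan_arctan, two_mul_sqrt_mul_sin_two_mul_arcsin_div h2q]
end

section
/- For every real x > 2, the function F : ℝ → ℝ defined by F(β) = β − (√x/2)·arctan(2·√x·sin(2β)/(x − 4·sin²β)) has derivative equal to 0 at the point β* = arcsin(√(x/(4(x−1)))), i.e. deriv F β* = 0. -/
/-!
Write `v = x - 4 sin²β`, `C = cos 2β`, `S = sin 2β`. Differentiating the query count `f` of the
paper gives `f'(β) = 1 - 2x (C v + 2 S²) / (v² + 4x S²)`. When `sin²β = x / (4(x - 1))` one finds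
`C v + 2 S² = x² / (2(x - 1))` and `v² + 4x S² = x³ / (x - 1)`, so the fraction equals `1`.
-/

open Real

noncomputable def queryCount (x β : ℝ) : ℝ :=
  β - (√x / 2) * arctan (2 * √x * sin (2 * β) / (x - 4 * sin β ^ 2))

theorem hasDerivAt_queryCount {x β : ℝ} (hx : 0 ≤ x) (hv : x - 4 * sin β ^ 2 ≠ 0) :
    HasDerivAt (queryCount x)
      (1 - 2 * x * (cos (2 * β) * (x - 4 * sin β ^ 2) + 2 * sin (2 * β) ^ 2) /
        ((x - 4 * sin β ^ 2) ^ 2 + 4 * x * sin (2 * β) ^ 2)) β := by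
  have hsin2 : HasDerivAt (fun β => sin (2 * β)) (cos (2 * β) * 2) β := by
    simpa using ((hasDerivAt_id β).const_mul 2).sin
  have hden : HasDerivAt (fun β => x - 4 * sin β ^ 2) (-(4 * (2 * sin β * cos β))) β := by
    simpa using (((hasDerivAt_sin β).pow 2).const_mul 4).const_sub x
  refine ((hasDerivAt_id β).sub
    ((((hsin2.const_mul (2 * √x)).div hden hv).arctan).const_mul (√x / 2))).congr_deriv ?_
  simp only [Pi.div_apply, ← sin_two_mul]
  have hr : √x ^ 2 = x := sq_sqrt hx
  generalize sin (2 * β) = S, cos (2 * β) = C, x - 4 * sin β ^ 2 = v at hv ⊢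
  have hD : v ^ 2 + 4 * x * S ^ 2 ≠ 0 := by positivity
  field_simp
  rw [hr]
  ring

theorem hasDerivAt_queryCount_eq_zero {x β : ℝ} (hx : 2 < x)
    (hβ : sin β ^ 2 = x / (4 * (x - 1))) : HasDerivAt (queryCount x) 0 β := by
  have hx1 : x - 1 ≠ 0 := by linarith
  have hv : x - 4 * sin β ^ 2 = x * (x - 2) / (x - 1) := by
    rw [hβ]; field_simp; ring
  have hC : cos (2 * β) = (x - 2) / (2 * (x - 1)) := by
    rw [cos_two_mul, cos_sq', hβ]; field_simp; ring
  have hS : sin (2 * β) ^ 2 = x * (3 * x - 4) / (4 * (x - 1) ^ 2) := by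
    rw [sin_two_mul, mul_pow, mul_pow, cos_sq', hβ]; field_simp; ring
  have hv0 : x - 4 * sin β ^ 2 ≠ 0 := by
    rw [hv]; have : x - 2 ≠ 0 := by linarith
    positivity
  have hN : cos (2 * β) * (x - 4 * sin β ^ 2) + 2 * sin (2 * β) ^ 2 = x ^ 2 / (2 * (x - 1)) := by
    rw [hv, hC, hS]; field_simp; ring
  have hD : (x - 4 * sin β ^ 2) ^ 2 + 4 * x * sin (2 * β) ^ 2 = x ^ 3 / (x - 1) := by
    rw [hv, hS]; field_simp; ring
  refine (hasDerivAt_queryCount (by linarith) hv0).congr_deriv ?_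
  rw [hN, hD]
  have : x ≠ 0 := by linarith
  field_simp
  ring

/-- First-order condition in the proof of Proposition 2: β* is a critical point. -/
theorem stmt_2 (x : ℝ) (hx : 2 < x) :
    deriv (fun β : ℝ => β - (Real.sqrt x / 2) *
      Real.arctan (2 * Real.sqrt x * Real.sin (2 * β) / (x - 4 * Real.sin β ^ 2)))
      (Real.arcsin (Real.sqrt (x / (4 * (x - 1))))) = 0 := by
  have ht0 : 0 ≤ x / (4 * (x - 1)) := by
    have : 0 < x - 1 := by linarith
    positivity
  have ht1 : x / (4 * (x - 1)) ≤ 1 := by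
    rw [div_le_one (by linarith)]; linarith
  refine (hasDerivAt_queryCount_eq_zero hx ?_).deriv
  rw [sin_arcsin (by linarith [sqrt_nonneg (x / (4 * (x - 1)))]) (sqrt_le_one.mpr ht1),
    sq_sqrt ht0]
end

section
/- For every real x ≥ 4, the function F : ℝ → ℝ defined by F(β) = β − (√x/2)·arctan(2·√x·sin(2β)/(x − 4·sin²β)) has strictly positive second derivative at β* = arcsin(√(x/(4(x−1)))), i.e. deriv (deriv F) β* > 0; in particular β* is a strict local minimum of F. -/
/-!
With `D(β) = x - 4 sin² β`, the chain rule gives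
`F'(β) = D (D - 2x cos 2β) / (D² + 4x sin² 2β)` wherever `D(β) ≠ 0`.
Since `sin² β* = x / (4(x - 1))`, one finds `D(β*) = x(x - 2)/(x - 1) = 2x cos 2β*`, so the
second factor of the numerator vanishes at `β*`; its derivative there is `4(x - 1) sin 2β*`,
whence `F''(β*) = 4(x - 1) D(β*) sin 2β* / (D² + 4x sin² 2β*) > 0` as soon as `x > 2`.
The strict local minimum follows from a strict second-derivative test: `F'` changes sign from
negative to positive at `β*`, so `F` is strictly monotone on either side.
-/

open Real Filter Topology

section StrictSecondDerivativeTest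

variable {f : ℝ → ℝ} {a : ℝ}

theorem eventually_nhdsGT_lt_of_deriv_pos (hc : ContinuousAt f a)
    (hpos : ∀ᶠ y in 𝓝[>] a, 0 < deriv f y) : ∀ᶠ y in 𝓝[>] a, f a < f y := by
  obtain ⟨b, hab, hsub⟩ := mem_nhdsGT_iff_exists_Ioo_subset.mp hpos
  have hcont : ContinuousOn f (Set.Ico a b) := by
    intro y hy
    rcases eq_or_lt_of_le hy.1 with rfl | hay
    · exact hc.continuousWithinAt
    · exact (differentiableAt_of_deriv_ne_zero (hsub ⟨hay, hy.2⟩).ne').continuousAt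
        |>.continuousWithinAt
  have hmono : StrictMonoOn f (Set.Ico a b) :=
    strictMonoOn_of_deriv_pos (convex_Ico a b) hcont fun y hy => hsub (by simpa using hy)
  filter_upwards [Ioo_mem_nhdsGT hab] with y hy
  exact hmono (Set.left_mem_Ico.mpr hab) (Set.Ioo_subset_Ico_self hy) hy.1

theorem eventually_nhdsLT_lt_of_deriv_neg (hc : ContinuousAt f a)
    (hneg : ∀ᶠ y in 𝓝[<] a, deriv f y < 0) : ∀ᶠ y in 𝓝[<] a, f a < f y := by
  obtain ⟨b, hba, hsub⟩ := mem_nhdsLT_iff_exists_Ioo_subset.mp hneg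
  have hcont : ContinuousOn f (Set.Ioc b a) := by
    intro y hy
    rcases eq_or_lt_of_le hy.2 with rfl | hya
    · exact hc.continuousWithinAt
    · exact (differentiableAt_of_deriv_ne_zero (hsub ⟨hy.1, hya⟩).ne).continuousAt
        |>.continuousWithinAt
  have hanti : StrictAntiOn f (Set.Ioc b a) :=
    strictAntiOn_of_deriv_neg (convex_Ioc b a) hcont fun y hy => hsub (by simpa using hy)
  filter_upwards [Ioo_mem_nhdsLT hba] with y hy
  exact hanti (Set.Ioo_subset_Ioc_self hy) (Set.right_mem_Ioc.mpr hba) hy.2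

theorem eventually_nhdsNE_lt_of_deriv_deriv_pos (hf : 0 < deriv (deriv f) a)
    (hd : deriv f a = 0) (hc : ContinuousAt f a) : ∀ᶠ y in 𝓝[≠] a, f a < f y := by
  have hsign := nhdsWithin_le_nhds (s := {a}ᶜ) <|
    eventually_nhdsWithin_sign_eq_of_deriv_pos hf hd
  rw [← nhdsLT_sup_nhdsGT, eventually_sup]
  exact ⟨eventually_nhdsLT_lt_of_deriv_neg hc (deriv_neg_left_of_sign_deriv hsign),
    eventually_nhdsGT_lt_of_deriv_pos hc (deriv_pos_right_of_sign_deriv hsign)⟩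

end StrictSecondDerivativeTest

theorem HasDerivAt.mul_div_of_eq_zero {𝕜 : Type*} [NontriviallyNormedField 𝕜]
    {f g h : 𝕜 → 𝕜} {f' g' a : 𝕜} (hf : HasDerivAt f f' a) (hg : HasDerivAt g g' a)
    (hh : DifferentiableAt 𝕜 h a) (hga : g a = 0) (hha : h a ≠ 0) :
    HasDerivAt (fun y => f y * g y / h y) (f a * g' / h a) a :=
  ((hf.mul hg).div hh.hasDerivAt hha).congr_deriv (by
    simp only [Pi.mul_apply, hga, mul_zero, zero_add, zero_mul, sub_zero]
    field_simp)

noncomputable def grkDenom (x β : ℝ) : ℝ := x - 4 * sin β ^ 2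

/-- The function `F` of Proposition 2. -/
noncomputable def grkCost (x β : ℝ) : ℝ :=
  β - (√x / 2) * arctan (2 * √x * sin (2 * β) / grkDenom x β)

noncomputable def grkCostDeriv (x β : ℝ) : ℝ :=
  grkDenom x β * (grkDenom x β - 2 * x * cos (2 * β)) /
    (grkDenom x β ^ 2 + 4 * x * sin (2 * β) ^ 2)

noncomputable def grkOptAngle (x : ℝ) : ℝ := arcsin (√(x / (4 * (x - 1))))

theorem continuous_grkDenom (x : ℝ) : Continuous (grkDenom x) := by
  unfold grkDenom; fun_prop

theorem hasDerivAt_grkDenom (x β : ℝ) : HasDerivAt (grkDenom x) (-(4 * sin (2 * β))) β := by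
  have h := (((hasDerivAt_sin β).pow 2).const_mul 4).const_sub x
  exact h.congr_deriv (by rw [sin_two_mul]; ring)

theorem hasDerivAt_grkCost {x β : ℝ} (hx : 0 ≤ x) (hD : grkDenom x β ≠ 0) :
    HasDerivAt (grkCost x) (grkCostDeriv x β) β := by
  have hu := (((hasDerivAt_id β).const_mul 2).sin.const_mul (2 * √x)).div
    (hasDerivAt_grkDenom x β) hD
  have h := (hasDerivAt_id β).sub (hu.arctan.const_mul (√x / 2))
  refine h.congr_deriv ?_
  have hQ : grkDenom x β ^ 2 + 4 * x * sin (2 * β) ^ 2 ≠ 0 := by positivity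
  simp only [grkCostDeriv, Pi.div_apply, id]
  field_simp
  rw [sq_sqrt hx]
  ring

theorem deriv_grkCost_eventuallyEq {x β : ℝ} (hx : 0 ≤ x) (hD : grkDenom x β ≠ 0) :
    deriv (grkCost x) =ᶠ[𝓝 β] grkCostDeriv x := by
  filter_upwards [(continuous_grkDenom x).continuousAt.eventually_ne hD] with y hy
  exact (hasDerivAt_grkCost hx hy).deriv

section OptAngle

variable {x : ℝ}

theorem sin_grkOptAngle (hx : 4 / 3 ≤ x) : sin (grkOptAngle x) = √(x / (4 * (x - 1))) :=
  sin_arcsin (by linarith [sqrt_nonneg (x / (4 * (x - 1)))])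
    (sqrt_le_one.mpr ((div_le_one (by linarith)).mpr (by linarith)))

theorem sin_sq_grkOptAngle (hx : 4 / 3 ≤ x) : sin (grkOptAngle x) ^ 2 = x / (4 * (x - 1)) := by
  rw [sin_grkOptAngle hx, sq_sqrt (div_nonneg (by linarith) (by linarith))]

theorem grkDenom_grkOptAngle (hx : 4 / 3 ≤ x) :
    grkDenom x (grkOptAngle x) = x * (x - 2) / (x - 1) := by
  have : x - 1 ≠ 0 := by linarith
  rw [grkDenom, sin_sq_grkOptAngle hx]
  field_simp
  ring

theorem grkDenom_grkOptAngle_pos (hx : 2 < x) : 0 < grkDenom x (grkOptAngle x) := by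
  rw [grkDenom_grkOptAngle (by linarith)]
  exact div_pos (by nlinarith) (by linarith)

theorem grkDenom_grkOptAngle_eq_mul_cos (hx : 4 / 3 ≤ x) :
    grkDenom x (grkOptAngle x) = 2 * x * cos (2 * grkOptAngle x) := by
  have : x - 1 ≠ 0 := by linarith
  rw [grkDenom_grkOptAngle hx, cos_two_mul, cos_sq', sin_sq_grkOptAngle hx]
  field_simp
  ring

theorem sin_two_mul_grkOptAngle_pos (hx : 4 / 3 < x) : 0 < sin (2 * grkOptAngle x) := by
  have ht : 0 < x / (4 * (x - 1)) := div_pos (by linarith) (by linarith)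
  have ht1 : x / (4 * (x - 1)) < 1 := (div_lt_one (by linarith)).mpr (by linarith)
  have hsin : 0 < sin (grkOptAngle x) := by
    rw [sin_grkOptAngle hx.le]
    exact sqrt_pos.mpr ht
  have hcos : 0 < cos (grkOptAngle x) := by
    rw [grkOptAngle, cos_arcsin, sq_sqrt ht.le]
    exact sqrt_pos.mpr (by linarith)
  rw [sin_two_mul]
  positivity

theorem grkCostDeriv_grkOptAngle (hx : 4 / 3 ≤ x) : grkCostDeriv x (grkOptAngle x) = 0 := by
  rw [grkCostDeriv, sub_eq_zero.mpr (grkDenom_grkOptAngle_eq_mul_cos hx), mul_zero, zero_div]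

theorem deriv_grkCostDeriv_grkOptAngle_pos (hx : 2 < x) :
    0 < deriv (grkCostDeriv x) (grkOptAngle x) := by
  set a := grkOptAngle x
  have hD : 0 < grkDenom x a := grkDenom_grkOptAngle_pos hx
  have hs : 0 < sin (2 * a) := sin_two_mul_grkOptAngle_pos (by linarith)
  have hE : HasDerivAt (fun β => grkDenom x β - 2 * x * cos (2 * β))
      (4 * (x - 1) * sin (2 * a)) a := by
    have := (hasDerivAt_grkDenom x a).sub
      (((hasDerivAt_id a).const_mul 2).cos.const_mul (2 * x))
    exact this.congr_deriv (by simp only [id_eq, mul_one]; ring)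
  have hQ : DifferentiableAt ℝ (fun β => grkDenom x β ^ 2 + 4 * x * sin (2 * β) ^ 2) a := by
    unfold grkDenom; fun_prop
  have h := (hasDerivAt_grkDenom x a).mul_div_of_eq_zero hE hQ
    (sub_eq_zero.mpr (grkDenom_grkOptAngle_eq_mul_cos (by linarith))) (by positivity)
  rw [HasDerivAt.deriv (f := grkCostDeriv x) h]
  have : 0 < x - 1 := by linarith
  positivity

end OptAngle

/-- Second-order condition in the proof of Proposition 2: for x ≥ 4 the second derivative
at β* is strictly positive, and β* is a strict local minimum. -/
theorem stmt_3 (x : ℝ) (hx : 4 ≤ x) :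
    0 < deriv (deriv (fun β : ℝ => β - (Real.sqrt x / 2) *
        Real.arctan (2 * Real.sqrt x * Real.sin (2 * β) / (x - 4 * Real.sin β ^ 2))))
        (Real.arcsin (Real.sqrt (x / (4 * (x - 1))))) ∧
    ∀ᶠ β in nhdsWithin (Real.arcsin (Real.sqrt (x / (4 * (x - 1)))))
        {Real.arcsin (Real.sqrt (x / (4 * (x - 1))))}ᶜ,
      (fun β : ℝ => β - (Real.sqrt x / 2) *
          Real.arctan (2 * Real.sqrt x * Real.sin (2 * β) / (x - 4 * Real.sin β ^ 2)))
        (Real.arcsin (Real.sqrt (x / (4 * (x - 1))))) <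
      (fun β : ℝ => β - (Real.sqrt x / 2) *
          Real.arctan (2 * Real.sqrt x * Real.sin (2 * β) / (x - 4 * Real.sin β ^ 2))) β := by
  change 0 < deriv (deriv (grkCost x)) (grkOptAngle x) ∧
    ∀ᶠ β in 𝓝[≠] grkOptAngle x, grkCost x (grkOptAngle x) < grkCost x β
  have hD : grkDenom x (grkOptAngle x) ≠ 0 := (grkDenom_grkOptAngle_pos (by linarith)).ne'
  have hF' := deriv_grkCost_eventuallyEq (by linarith) hD
  have hF'' : 0 < deriv (deriv (grkCost x)) (grkOptAngle x) := by
    rw [hF'.deriv_eq]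
    exact deriv_grkCostDeriv_grkOptAngle_pos (by linarith)
  have hcrit : deriv (grkCost x) (grkOptAngle x) = 0 := by
    rw [hF'.eq_of_nhds, grkCostDeriv_grkOptAngle (by linarith)]
  exact ⟨hF'', eventually_nhdsNE_lt_of_deriv_deriv_pos hF'' hcrit
    (hasDerivAt_grkCost (by linarith) hD).continuousAt⟩
end

section
/- The function F₂ : ℝ → ℝ defined by F₂(β) = β − (√2/2)·arctan(2·√2·sin(2β)/(2 − 4·sin²β)) is strictly decreasing on the open interval (0, π/4); indeed, for every β ∈ (0, π/4) its derivative equals (4·sin²β − 2)²/((4·sin²β − 2)² − 8), which is strictly negative. -/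
/-!
Since `2 - 4 sin² β = 2 cos 2β`, the arctan argument is `√2 tan 2β`, and
`d/dx arctan (a tan x) = a / (cos² x + a² sin² x)`. With `a = √2` this gives
`F₂' β = 1 - 2 / (1 + sin² 2β) = cos² 2β / (cos² 2β - 2)`, which is negative wherever
`cos 2β ≠ 0`, in particular on `(0, π/4)`.
-/

open Real

noncomputable def F₂ (β : ℝ) : ℝ :=
  β - (√2 / 2) * arctan (2 * √2 * sin (2 * β) / (2 - 4 * sin β ^ 2))

lemma two_sub_four_mul_sin_sq (x : ℝ) : 2 - 4 * sin x ^ 2 = 2 * cos (2 * x) := by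
  rw [cos_two_mul_eq_one_sub]; ring

-- Valid even where `cos 2β = 0`: both sides then use the junk value `x / 0 = 0`.
lemma F₂_eq_arctan_tan : F₂ = fun β => β - (√2 / 2) * arctan (√2 * tan (2 * β)) := by
  ext β
  rw [F₂, two_sub_four_mul_sin_sq, tan_eq_sin_div_cos, mul_comm 2 √2, mul_assoc, mul_div_assoc,
    mul_div_mul_left _ _ two_ne_zero]

lemma hasDerivAt_arctan_const_mul_tan (a : ℝ) {x : ℝ} (hx : cos x ≠ 0) :
    HasDerivAt (fun x => arctan (a * tan x)) (a / (cos x ^ 2 + a ^ 2 * sin x ^ 2)) x := by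
  convert ((hasDerivAt_tan hx).const_mul a).arctan using 1
  rw [tan_eq_sin_div_cos]
  field_simp

lemma hasDerivAt_F₂ {β : ℝ} (hβ : cos (2 * β) ≠ 0) :
    HasDerivAt F₂ (cos (2 * β) ^ 2 / (cos (2 * β) ^ 2 - 2)) β := by
  have hden : cos (2 * β) ^ 2 - 2 ≠ 0 := by linarith [cos_sq_le_one (2 * β)]
  have h := ((hasDerivAt_arctan_const_mul_tan √2 hβ).comp β
    ((hasDerivAt_id β).const_mul 2)).const_mul (√2 / 2)
  rw [F₂_eq_arctan_tan]
  refine ((hasDerivAt_id β).sub h).congr_deriv ?_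
  rw [sq_sqrt zero_le_two, sin_sq,
    show cos (2 * β) ^ 2 + 2 * (1 - cos (2 * β) ^ 2) = -(cos (2 * β) ^ 2 - 2) by ring]
  field_simp
  rw [sq_sqrt zero_le_two]
  ring

lemma cos_sq_div_cos_sq_sub_two_neg {x : ℝ} (hx : cos x ≠ 0) :
    cos x ^ 2 / (cos x ^ 2 - 2) < 0 :=
  div_neg_of_pos_of_neg (by positivity) (by linarith [cos_sq_le_one x])

lemma four_mul_sin_sq_sub_two_sq_div (x : ℝ) :
    (4 * sin x ^ 2 - 2) ^ 2 / ((4 * sin x ^ 2 - 2) ^ 2 - 8)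
      = cos (2 * x) ^ 2 / (cos (2 * x) ^ 2 - 2) := by
  have h : (4 * sin x ^ 2 - 2) ^ 2 = 4 * cos (2 * x) ^ 2 := by
    linear_combination (2 - 4 * sin x ^ 2 + 2 * cos (2 * x)) * two_sub_four_mul_sin_sq x
  rw [h, show (4 : ℝ) * cos (2 * x) ^ 2 - 8 = 4 * (cos (2 * x) ^ 2 - 2) by ring,
    mul_div_mul_left _ _ four_ne_zero]

/-- The case q = 1 (x = 2) in the proof of Proposition 2: the function F₂ is strictly
decreasing on (0, π/4), its derivative there being (4 sin²β − 2)²/((4 sin²β − 2)² − 8) < 0. -/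
theorem stmt_4 :
    StrictAntiOn (fun β : ℝ => β - (Real.sqrt 2 / 2) *
        Real.arctan (2 * Real.sqrt 2 * Real.sin (2 * β) / (2 - 4 * Real.sin β ^ 2)))
      (Set.Ioo 0 (Real.pi / 4)) ∧
    ∀ β ∈ Set.Ioo (0 : ℝ) (Real.pi / 4),
      deriv (fun β : ℝ => β - (Real.sqrt 2 / 2) *
          Real.arctan (2 * Real.sqrt 2 * Real.sin (2 * β) / (2 - 4 * Real.sin β ^ 2))) β
        = (4 * Real.sin β ^ 2 - 2) ^ 2 / ((4 * Real.sin β ^ 2 - 2) ^ 2 - 8) ∧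
      (4 * Real.sin β ^ 2 - 2) ^ 2 / ((4 * Real.sin β ^ 2 - 2) ^ 2 - 8) < 0 := by
  change StrictAntiOn F₂ _ ∧ ∀ β ∈ _, deriv F₂ β = _ ∧ _
  have hcos : ∀ β ∈ Set.Ioo 0 (π / 4), cos (2 * β) ≠ 0 := fun β hβ =>
    (cos_pos_of_mem_Ioo ⟨by linarith [hβ.1, pi_pos], by linarith [hβ.2]⟩).ne'
  have hderiv : ∀ β ∈ Set.Ioo 0 (π / 4), HasDerivAt F₂
      ((4 * sin β ^ 2 - 2) ^ 2 / ((4 * sin β ^ 2 - 2) ^ 2 - 8)) β := fun β hβ => by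
    rw [four_mul_sin_sq_sub_two_sq_div]
    exact hasDerivAt_F₂ (hcos β hβ)
  have hneg : ∀ β ∈ Set.Ioo 0 (π / 4),
      (4 * sin β ^ 2 - 2) ^ 2 / ((4 * sin β ^ 2 - 2) ^ 2 - 8) < 0 := fun β hβ => by
    rw [four_mul_sin_sq_sub_two_sq_div]
    exact cos_sq_div_cos_sq_sub_two_neg (hcos β hβ)
  refine ⟨strictAntiOn_of_deriv_neg (convex_Ioo _ _)
    (fun β hβ => (hderiv β hβ).continuousAt.continuousWithinAt) fun β hβ => ?_,
    fun β hβ => ⟨(hderiv β hβ).deriv, hneg β hβ⟩⟩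
  rw [interior_Ioo] at hβ
  rw [(hderiv β hβ).deriv]
  exact hneg β hβ
end

section
/- Let n ≥ 1 be an integer and let a, E, F, θ, φ be real numbers with F > 0, a ≠ 0, and (E − 2^{n−1}·F)² ≤ a². Suppose cos θ = (2^{2n−1}·F² − 2^n·E·F + E² − a²)/(E² − 2^n·E·F − a²), cos φ = (2^{n−1}·F − E)/a, and a·sin φ·sin θ > 0. Then cos(φ + θ/2) = −E·cos(θ/2)/a and sin(φ + θ/2) = ((cos θ − 1)·E + 2^n·F)/(2·a·sin(θ/2)). -/
open Real

/-! With `k = 2^(n-1) F`, the hypothesis on `cos φ` gives `E² - 2^n E F - a² = -(a² sin² φ + k²)`, so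
the hypothesis on `cos θ` says exactly `sin² (θ/2) (a² sin² φ + k²) = k²`, i.e.
`(a sin φ sin (θ/2))² = (k cos (θ/2))²`. The sign condition `a sin φ sin θ > 0` picks the root
`a sin φ sin (θ/2) = k cos (θ/2)`, and both formulas follow from the addition theorems. -/

theorem eq_of_sq_eq_sq_of_mul_pos {R : Type*} [CommRing R] [LinearOrder R] [IsStrictOrderedRing R]
    {x y : R} (h : x ^ 2 = y ^ 2) (hxy : 0 < x * y) : x = y := by
  rcases sq_eq_sq_iff_eq_or_eq_neg.1 h with h | rfl
  · exact h
  · nlinarith [sq_nonneg y]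

namespace Real

theorem sin_eq_two_mul_sin_half_mul_cos_half (θ : ℝ) :
    sin θ = 2 * sin (θ / 2) * cos (θ / 2) := by
  rw [← sin_two_mul, mul_div_cancel₀ θ two_ne_zero]

theorem cos_eq_one_sub_two_mul_sin_half_sq (θ : ℝ) : cos θ = 1 - 2 * sin (θ / 2) ^ 2 := by
  rw [← cos_two_mul_eq_one_sub, mul_div_cancel₀ θ two_ne_zero]

end Real

section GroverPhases

variable {k a E θ φ : ℝ}

theorem grover_denominator_eq (hcosφ : a * cos φ = k - E) :
    E ^ 2 - 2 * k * E - a ^ 2 = -(a ^ 2 * sin φ ^ 2 + k ^ 2) := by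
  linear_combination (-(a * cos φ + (k - E))) * hcosφ + a ^ 2 * sin_sq_add_cos_sq φ

theorem grover_mul_sin_mul_sin_half (hk : 0 < k)
    (hcosθ : cos θ = (2 * k ^ 2 - 2 * k * E + E ^ 2 - a ^ 2) / (E ^ 2 - 2 * k * E - a ^ 2))
    (hcosφ : a * cos φ = k - E) (hsign : 0 < a * sin φ * sin θ) :
    a * sin φ * sin (θ / 2) = k * cos (θ / 2) := by
  have hsin_half_sq : sin (θ / 2) ^ 2 * (a ^ 2 * sin φ ^ 2 + k ^ 2) = k ^ 2 := by
    have hden := grover_denominator_eq hcosφ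
    rw [hden, cos_eq_one_sub_two_mul_sin_half_sq θ] at hcosθ
    field_simp at hcosθ
    linear_combination (hden - hcosθ) / 2
  refine eq_of_sq_eq_sq_of_mul_pos ?_ ?_
  · linear_combination hsin_half_sq - k ^ 2 * sin_sq_add_cos_sq (θ / 2)
  · calc 0 < k / 2 * (a * sin φ * sin θ) := by positivity
      _ = a * sin φ * sin (θ / 2) * (k * cos (θ / 2)) := by
        rw [sin_eq_two_mul_sin_half_mul_cos_half θ]; ring

variable (ha : a ≠ 0) (hcosφ : a * cos φ = k - E)
  (hkey : a * sin φ * sin (θ / 2) = k * cos (θ / 2))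
include ha hcosφ hkey

theorem grover_cos_add_half : cos (φ + θ / 2) = -E * cos (θ / 2) / a := by
  rw [cos_add, eq_div_iff ha]
  linear_combination cos (θ / 2) * hcosφ - hkey

theorem grover_sin_add_half (hs : sin (θ / 2) ≠ 0) :
    sin (φ + θ / 2) = ((cos θ - 1) * E + 2 * k) / (2 * a * sin (θ / 2)) := by
  rw [sin_add, eq_div_iff (by positivity), cos_eq_one_sub_two_mul_sin_half_sq θ]
  linear_combination 2 * cos (θ / 2) * hkey + 2 * sin (θ / 2) ^ 2 * hcosφ
    + 2 * k * sin_sq_add_cos_sq (θ / 2)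

end GroverPhases

theorem stmt_5_general (n : ℕ) (hn : 1 ≤ n) (a E F θ φ : ℝ)
    (hF : 0 < F)
    (hcosθ : Real.cos θ =
      (2 ^ (2 * n - 1) * F ^ 2 - 2 ^ n * E * F + E ^ 2 - a ^ 2) /
        (E ^ 2 - 2 ^ n * E * F - a ^ 2))
    (hcosφ : Real.cos φ = (2 ^ (n - 1) * F - E) / a)
    (hsign : 0 < a * Real.sin φ * Real.sin θ) :
    Real.cos (φ + θ / 2) = -E * Real.cos (θ / 2) / a ∧
    Real.sin (φ + θ / 2) =
      ((Real.cos θ - 1) * E + 2 ^ n * F) / (2 * a * Real.sin (θ / 2)) := by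
  have ha : a ≠ 0 := by rintro rfl; simp at hsign
  have hs : sin (θ / 2) ≠ 0 := by
    rintro h; simp [sin_eq_two_mul_sin_half_mul_cos_half θ, h] at hsign
  have h2n : (2 : ℝ) ^ n = 2 * 2 ^ (n - 1) := by rw [← pow_succ', Nat.sub_add_cancel hn]
  have h22n : (2 : ℝ) ^ (2 * n - 1) = 2 * (2 ^ (n - 1)) ^ 2 := by
    rw [← pow_mul, ← pow_succ']; congr 1; omega
  set k := (2 : ℝ) ^ (n - 1) * F
  have hk : 0 < k := by positivity
  have hcosθ' : cos θ = (2 * k ^ 2 - 2 * k * E + E ^ 2 - a ^ 2) / (E ^ 2 - 2 * k * E - a ^ 2) := by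
    rw [hcosθ, h2n, h22n]; ring
  have hcosφ' : a * cos φ = k - E := by rw [hcosφ]; field_simp
  have hkey := grover_mul_sin_mul_sin_half hk hcosθ' hcosφ' hsign
  rw [h2n, mul_assoc]
  exact ⟨grover_cos_add_half ha hcosφ' hkey, grover_sin_add_half ha hcosφ' hkey hs⟩

/-- Lemma 1 of the paper: choice of phases θ, φ for the generalized Grover operator. -/
theorem stmt_5 (n : ℕ) (hn : 1 ≤ n) (a E F θ φ : ℝ)
    (hF : 0 < F) (ha : a ≠ 0)
    (hineq : (E - 2 ^ (n - 1) * F) ^ 2 ≤ a ^ 2)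
    (hcosθ : Real.cos θ =
      (2 ^ (2 * n - 1) * F ^ 2 - 2 ^ n * E * F + E ^ 2 - a ^ 2) /
        (E ^ 2 - 2 ^ n * E * F - a ^ 2))
    (hcosφ : Real.cos φ = (2 ^ (n - 1) * F - E) / a)
    (hsign : 0 < a * Real.sin φ * Real.sin θ) :
    Real.cos (φ + θ / 2) = -E * Real.cos (θ / 2) / a ∧
    Real.sin (φ + θ / 2) =
      ((Real.cos θ - 1) * E + 2 ^ n * F) / (2 * a * Real.sin (θ / 2)) :=
  stmt_5_general n hn a E F θ φ hF hcosθ hcosφ hsign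
end

section
/- Let n ≥ 1 be an integer and let a, E, F, θ, φ be real numbers with F > 0, a ≠ 0, and (E − 2^{n−1}·F)² ≤ a². Suppose cos θ = (2^{2n−1}·F² − 2^n·E·F + E² − a²)/(E² − 2^n·E·F − a²), cos φ = (2^{n−1}·F − E)/a, and a·sin φ·sin θ > 0. Then a·sin φ·sin θ = 2^n·F + 2^{3n−2}·F³/(E² − 2^n·E·F − a²). -/
/-!
Put `c = 2^(n-1) F` and `D = E² - 2cE - a²`, so that `cos θ = (D + 2c²)/D`, `cos φ = (c - E)/a`
and the hypothesis reads `D + c² = (E - c)² - a² ≤ 0`. Then `a² sin² φ = -(D + c²)` and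
`sin² θ = -4c²(D + c²)/D²`, so `(a sin φ sin θ)² = R²` with `R = 2c(D + c²)/D = 2c + 2c³/D`.
Both `D + c²` and `D` are nonpositive, so `R ≥ 0`, and the sign condition selects the root
`a sin φ sin θ = R`.
-/

open Real

lemma sq_mul_sin_of_cos_eq_div {a b φ : ℝ} (ha : a ≠ 0) (h : cos φ = b / a) :
    (a * sin φ) ^ 2 = a ^ 2 - b ^ 2 := by
  rw [mul_pow, sin_sq, h]
  field_simp

lemma mul_sin_mul_sin_eq {a E c θ φ : ℝ} (hc : 0 < c) (ha : a ≠ 0)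
    (hineq : (E - c) ^ 2 ≤ a ^ 2)
    (hcosθ : cos θ = (2 * c ^ 2 - 2 * c * E + E ^ 2 - a ^ 2) / (E ^ 2 - 2 * c * E - a ^ 2))
    (hcosφ : cos φ = (c - E) / a) (hsign : 0 < a * sin φ * sin θ) :
    a * sin φ * sin θ = 2 * c + 2 * c ^ 3 / (E ^ 2 - 2 * c * E - a ^ 2) := by
  set D := E ^ 2 - 2 * c * E - a ^ 2 with hD
  have hDc : D + c ^ 2 ≤ 0 := by linarith [show D + c ^ 2 = (E - c) ^ 2 - a ^ 2 by ring]
  have hDneg : D < 0 := by nlinarith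
  have hD0 : D ≠ 0 := hDneg.ne
  have hsinφ : (a * sin φ) ^ 2 = -(D + c ^ 2) := by
    rw [sq_mul_sin_of_cos_eq_div ha hcosφ, hD]; ring
  have hcosθ' : cos θ = (D + 2 * c ^ 2) / D := by rw [hcosθ]; ring
  have hsq : (a * sin φ * sin θ) ^ 2 = (2 * c * (D + c ^ 2) / D) ^ 2 := by
    rw [mul_pow, hsinφ, sin_sq, hcosθ']
    field_simp
    ring
  have hR : 0 ≤ 2 * c * (D + c ^ 2) / D :=
    div_nonneg_of_nonpos (mul_nonpos_of_nonneg_of_nonpos (by positivity) hDc) hDneg.le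
  rw [(sq_eq_sq₀ hsign.le hR).mp hsq]
  field_simp

/-- Key equation (C.5) in the proof of Lemma 1 of the paper. -/
theorem stmt_6 (n : ℕ) (hn : 1 ≤ n) (a E F θ φ : ℝ)
    (hF : 0 < F) (ha : a ≠ 0)
    (hineq : (E - 2 ^ (n - 1) * F) ^ 2 ≤ a ^ 2)
    (hcosθ : Real.cos θ =
      (2 ^ (2 * n - 1) * F ^ 2 - 2 ^ n * E * F + E ^ 2 - a ^ 2) /
        (E ^ 2 - 2 ^ n * E * F - a ^ 2))
    (hcosφ : Real.cos φ = (2 ^ (n - 1) * F - E) / a)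
    (hsign : 0 < a * Real.sin φ * Real.sin θ) :
    a * Real.sin φ * Real.sin θ =
      2 ^ n * F + 2 ^ (3 * n - 2) * F ^ 3 / (E ^ 2 - 2 ^ n * E * F - a ^ 2) := by
  obtain ⟨m, rfl⟩ : ∃ m, n = m + 1 := ⟨n - 1, by omega⟩
  have h1 : (2 : ℝ) ^ (m + 1) * F = 2 * (2 ^ m * F) := by ring
  have h1E : (2 : ℝ) ^ (m + 1) * E * F = 2 * (2 ^ m * F) * E := by ring
  have h2 : (2 : ℝ) ^ (2 * (m + 1) - 1) * F ^ 2 = 2 * (2 ^ m * F) ^ 2 := by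
    rw [show 2 * (m + 1) - 1 = 2 * m + 1 by omega]; ring
  have h3 : (2 : ℝ) ^ (3 * (m + 1) - 2) * F ^ 3 = 2 * (2 ^ m * F) ^ 3 := by
    rw [show 3 * (m + 1) - 2 = 3 * m + 1 by omega]; ring
  rw [Nat.add_sub_cancel] at hineq hcosφ
  rw [h1E, h2] at hcosθ
  rw [h1E, h3, h1]
  exact mul_sin_mul_sin_eq (by positivity) ha hineq hcosθ hcosφ hsign
end

section
/- Let n ≥ 1 be an integer and let a, E, F, θ, φ be real numbers with a ≠ 0 and sin(θ/2) ≠ 0. If cos(φ + θ/2) = −E·cos(θ/2)/a and sin(φ + θ/2) = ((cos θ − 1)·E + 2^n·F)/(2·a·sin(θ/2)), then in the complex numbers (1 − exp(i·θ))·(a·exp(i·φ) + E)/2^n − F = 0. -/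
open Real Complex

/-! Since `1 - exp (iθ) = -2i sin (θ/2) exp (iθ/2)`, the numerator equals `2 sin (θ/2)` times
`J - R i`, where `R + J i = a exp (i(φ + θ/2)) + E exp (iθ/2)`. The cosine condition says `R = 0`,
and with `cos θ - 1 = -2 sin² (θ/2)` the sine condition says `2 sin (θ/2) J = 2ⁿ F`. -/

theorem Complex.one_sub_exp_mul_I (x : ℂ) :
    1 - exp (I * x) = -2 * I * sin (x / 2) * exp (I * (x / 2)) := by
  have hsq : exp (I * x) = exp (I * (x / 2)) * exp (I * (x / 2)) := by
    rw [← Complex.exp_add]; ring_nf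
  have hinv : exp (-(x / 2) * I) * exp (I * (x / 2)) = 1 := by
    rw [← Complex.exp_add]; ring_nf; exact Complex.exp_zero
  rw [hsq, Complex.sin, mul_comm (x / 2) I]
  linear_combination
    (exp (-(x / 2) * I) * exp (I * (x / 2)) - exp (I * (x / 2)) ^ 2) * I_sq - hinv

theorem Complex.one_sub_exp_mul_I_mul_add (θ φ a E : ℝ) :
    (1 - exp (I * θ)) * (a * exp (I * φ) + E) =
      2 * Real.sin (θ / 2) * ((a * Real.sin (φ + θ / 2) + E * Real.sin (θ / 2) : ℝ) -
        (a * Real.cos (φ + θ / 2) + E * Real.cos (θ / 2) : ℝ) * I) := by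
  have hshift : exp (I * (θ / 2)) * (a * exp (I * φ) + E) =
      a * exp ((φ + θ / 2 : ℝ) * I) + E * exp ((θ / 2 : ℝ) * I) := by
    rw [mul_add, ← mul_assoc, mul_comm _ (a : ℂ), mul_assoc, ← Complex.exp_add]
    push_cast; ring_nf
  rw [one_sub_exp_mul_I, mul_assoc, hshift, exp_ofReal_mul_I, exp_ofReal_mul_I,
    show (θ : ℂ) / 2 = (θ / 2 : ℝ) by push_cast; rfl, ← ofReal_sin]
  simp only [ofReal_add, ofReal_mul]
  linear_combination
    (-2 * Real.sin (θ / 2) * (a * Real.sin (φ + θ / 2) + E * Real.sin (θ / 2)) : ℂ) * I_sq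

theorem stmt_7_general (n : ℕ) (a E F θ φ : ℝ)
    (ha : a ≠ 0) (hs : Real.sin (θ / 2) ≠ 0)
    (hcos : Real.cos (φ + θ / 2) = -E * Real.cos (θ / 2) / a)
    (hsin : Real.sin (φ + θ / 2) =
      ((Real.cos θ - 1) * E + 2 ^ n * F) / (2 * a * Real.sin (θ / 2))) :
    (1 - Complex.exp (Complex.I * θ)) * ((a : ℂ) * Complex.exp (Complex.I * φ) + (E : ℂ)) /
        (2 : ℂ) ^ n - (F : ℂ) = 0 := by
  have hre : a * Real.cos (φ + θ / 2) + E * Real.cos (θ / 2) = 0 := by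
    rw [hcos]; field_simp; ring
  have hcosθ : Real.cos θ = 1 - 2 * Real.sin (θ / 2) ^ 2 := by
    rw [← Real.cos_two_mul_eq_one_sub]; ring_nf
  have him :
      2 * Real.sin (θ / 2) * (a * Real.sin (φ + θ / 2) + E * Real.sin (θ / 2)) = 2 ^ n * F := by
    rw [hsin, hcosθ]; field_simp; ring
  rw [sub_eq_zero, div_eq_iff (pow_ne_zero n two_ne_zero), one_sub_exp_mul_I_mul_add, hre]
  rw [ofReal_zero, zero_mul, sub_zero]
  exact_mod_cast him.trans (mul_comm _ _)

/-- Key computation in the proof of Theorem 1 of the paper: the non-target block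
amplitude vanishes under the stated angle conditions. -/
theorem stmt_7 (n : ℕ) (hn : 1 ≤ n) (a E F θ φ : ℝ)
    (ha : a ≠ 0) (hs : Real.sin (θ / 2) ≠ 0)
    (hcos : Real.cos (φ + θ / 2) = -E * Real.cos (θ / 2) / a)
    (hsin : Real.sin (φ + θ / 2) =
      ((Real.cos θ - 1) * E + 2 ^ n * F) / (2 * a * Real.sin (θ / 2))) :
    (1 - Complex.exp (Complex.I * θ)) * ((a : ℂ) * Complex.exp (Complex.I * φ) + (E : ℂ)) /
        (2 : ℂ) ^ n - (F : ℂ) = 0 :=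
  stmt_7_general n a E F θ φ ha hs hcos hsin
end

section
/- Let N ≥ 2 be a natural number. Work in ℂ^N with standard basis (e_x)_{x ∈ Fin N}, let φ = (1/√N)·∑_x e_x, fix a target t ∈ Fin N, let U be the linear map with U e_t = −e_t and U e_x = e_x for x ≠ t, let D ψ = 2⟨φ,ψ⟩φ − ψ, and let G = D ∘ U. Set λ = arcsin(1/√N). Then for every natural number p, G^p φ = sin((2p+1)·λ)·e_t + (cos((2p+1)·λ)/√(N−1))·∑_{x ≠ t} e_x. -/
/-!
Every iterate of the uniform superposition stays in the real plane spanned by `e_t` and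
`∑_{x ≠ t} e_x`. Writing a state there as `sin θ · e_t + (cos θ / √(N - 1)) · ∑_{x ≠ t} e_x`,
the oracle followed by the diffusion acts as the rotation `θ ↦ θ + 2λ`, since `sin λ = 1 / √N`;
the uniform superposition itself is the state at `θ = λ`.
-/

open Real Finset

theorem sum_ite_eq_add_card_sub_one_mul {ι R : Type*} [Fintype ι] [DecidableEq ι] [CommRing R]
    (t : ι) (a b : R) :
    ∑ i, (if i = t then a else b) = a + (Fintype.card ι - 1) * b := by
  calc ∑ i, (if i = t then a else b)
      = ∑ i, (b + if i = t then a - b else 0) := by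
        congr! 1 with i; split_ifs <;> ring
    _ = a + (Fintype.card ι - 1) * b := by
        rw [sum_add_distrib, sum_ite_eq' univ t]; simp; ring

theorem cos_arcsin_one_div_sqrt {n : ℝ} (hn : 0 < n) :
    cos (arcsin (1 / √n)) = √(n - 1) / √n := by
  rw [cos_arcsin, div_pow, one_pow, sq_sqrt hn.le, one_sub_div hn.ne', sqrt_div' _ hn.le]

theorem sin_arcsin_one_div_sqrt {n : ℝ} (hn : 1 ≤ n) : sin (arcsin (1 / √n)) = 1 / √n := by
  have hsqrt : 1 ≤ √n := one_le_sqrt.mpr hn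
  exact sin_arcsin (by linarith [show 0 ≤ 1 / √n by positivity])
    ((div_le_one (by linarith)).mpr hsqrt)

namespace Grover

variable {N : ℕ}

def oracle (t : Fin N) (ψ : Fin N → ℂ) : Fin N → ℂ :=
  fun x => if x = t then -ψ x else ψ x

def diffusion (φ ψ : Fin N → ℂ) : Fin N → ℂ :=
  fun x => 2 * (∑ y, starRingEnd ℂ (φ y) * ψ y) * φ x - ψ x

def twoLevel (t : Fin N) (a b : ℝ) : Fin N → ℂ :=
  fun x => if x = t then (a : ℂ) else b

theorem oracle_twoLevel (t : Fin N) (a b : ℝ) :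
    oracle t (twoLevel t a b) = twoLevel t (-a) b := by
  ext x
  by_cases hx : x = t <;> simp [oracle, twoLevel, hx]

theorem diffusion_const_twoLevel (t : Fin N) (r a b : ℝ) :
    diffusion (fun _ => (r : ℂ)) (twoLevel t a b) =
      twoLevel t (2 * r ^ 2 * (a + (N - 1) * b) - a) (2 * r ^ 2 * (a + (N - 1) * b) - b) := by
  have hsum : ∑ y, starRingEnd ℂ (r : ℂ) * twoLevel t a b y = r * (a + (N - 1) * b) := by
    simp only [Complex.conj_ofReal, twoLevel, ← mul_sum, sum_ite_eq_add_card_sub_one_mul,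
      Fintype.card_fin]
  ext x
  simp only [diffusion, hsum]
  by_cases hx : x = t <;> simp [twoLevel, hx] <;> ring

noncomputable def state (N : ℕ) (t : Fin N) (θ : ℝ) : Fin N → ℂ :=
  twoLevel t (sin θ) (cos θ / √(N - 1))

variable (t : Fin N)

theorem diffusion_oracle_state (hN : 1 < N) (θ : ℝ) :
    diffusion (fun _ => ((1 / √N : ℝ) : ℂ)) (oracle t (state N t θ)) =
      state N t (θ + 2 * arcsin (1 / √N)) := by
  have hN' : (1 : ℝ) < N := by exact_mod_cast hN
  have hsqrtN1 : √((N : ℝ) - 1) ≠ 0 := (sqrt_pos.mpr (by linarith)).ne'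
  have hsin : sin (2 * arcsin (1 / √N)) = 2 * √(N - 1) / N := by
    rw [sin_two_mul, sin_arcsin_one_div_sqrt hN'.le, cos_arcsin_one_div_sqrt (by linarith)]
    field_simp
    rw [sq_sqrt (by linarith)]
  have hcos : cos (2 * arcsin (1 / √N)) = 1 - 2 / N := by
    rw [cos_two_mul, cos_arcsin_one_div_sqrt (by linarith), div_pow, sq_sqrt (by linarith),
      sq_sqrt (by linarith)]
    field_simp
    ring
  rw [state, oracle_twoLevel, diffusion_const_twoLevel, state, sin_add, cos_add, hsin, hcos]
  have hN2 : √(N : ℝ) ^ 2 = N := sq_sqrt (by linarith)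
  have hN12 : √((N : ℝ) - 1) ^ 2 = N - 1 := sq_sqrt (by linarith)
  congr 1 <;> field_simp <;> rw [hN2]
  · linear_combination (-2 * N * cos θ) * hN12
  · ring

theorem state_arcsin_one_div_sqrt (hN : 1 < N) :
    state N t (arcsin (1 / √N)) = fun _ => ((1 / √N : ℝ) : ℂ) := by
  have hN' : (1 : ℝ) < N := by exact_mod_cast hN
  have hsqrtN1 : √((N : ℝ) - 1) ≠ 0 := (sqrt_pos.mpr (by linarith)).ne'
  rw [state, sin_arcsin_one_div_sqrt hN'.le, cos_arcsin_one_div_sqrt (by linarith),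
    div_div_cancel_left' hsqrtN1]
  ext x
  simp only [twoLevel, one_div, ite_self]

end Grover

open Grover in
/-- Lemma 2 of the paper: the state after p iterations of the Grover operator applied to
the uniform superposition, when there is a unique marked item t. -/
theorem stmt_9 (N : ℕ) (hN : 2 ≤ N)
    (φ : Fin N → ℂ) (hφ : ∀ x, φ x = (1 / Real.sqrt N : ℝ))
    (t : Fin N)
    (U : (Fin N → ℂ) → (Fin N → ℂ))
    (hU : ∀ ψ x, U ψ x = if x = t then -ψ x else ψ x)
    (D : (Fin N → ℂ) → (Fin N → ℂ))
    (hD : ∀ ψ x, D ψ x = 2 * (∑ y, (starRingEnd ℂ) (φ y) * ψ y) * φ x - ψ x)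
    (G : (Fin N → ℂ) → (Fin N → ℂ)) (hG : G = D ∘ U)
    (lam : ℝ) (hlam : lam = Real.arcsin (1 / Real.sqrt N)) :
    ∀ p : ℕ, ∀ x : Fin N, G^[p] φ x =
      if x = t then ((Real.sin ((2 * p + 1) * lam) : ℝ) : ℂ)
      else ((Real.cos ((2 * p + 1) * lam) / Real.sqrt ((N : ℝ) - 1) : ℝ) : ℂ) := by
  have hφ : φ = fun _ => ((1 / √N : ℝ) : ℂ) := funext hφ
  have hG : G = diffusion φ ∘ oracle t := by
    ext ψ x
    simp only [hG, Function.comp_apply, hD, hU, diffusion, oracle]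
  have hstep : Function.Semiconj (state N t) (· + 2 * lam) G := fun θ => by
    rw [hG, Function.comp_apply, hφ, diffusion_oracle_state t hN, hlam]
  intro p x
  have hiter := hstep.iterate_right p lam
  rw [add_right_iterate_apply, nsmul_eq_mul] at hiter
  have hangle : lam + p * (2 * lam) = (2 * p + 1) * lam := by ring
  rw [hφ, ← state_arcsin_one_div_sqrt t hN, ← hlam, ← hiter, hangle, state, twoLevel]
end

section
/- Let A ≥ 2 and B ≥ 2 be natural numbers and set N = A·B. Work in ℂ^N with standard basis indexed by pairs (u,v) ∈ Fin A × Fin B. Fix a target (t*,t'), let U flip the sign of the coordinate at (t*,t') and fix all other basis vectors, and let G₃ = D_loc ∘ U where (D_loc ψ)(u,v) = (2/B)·∑_{v'} ψ(u,v') − ψ(u,v). Set θ' = arcsin(1/√B) and define ψ₀± ∈ ℂ^N by: coordinate 1/√2 at (t*,t'), coordinate ±i/(√2·√(B−1)) at (t*,v') for every v' ≠ t', and coordinate 0 at all indices (u,v') with u ≠ t*. Then G₃ ψ₀⁺ = exp(2iθ')·ψ₀⁺ and G₃ ψ₀⁻ = exp(−2iθ')·ψ₀⁻. -/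
open Real Finset Complex

/-! The iterate preserves the vectors supported on the target block `{t*} × Fin B` that take one
value `α` at the marked coordinate and a common value `β` at the other `B - 1`, acting on `(α, β)`
as a `2 × 2` matrix. With `b = √(B - 1)`, `J = ±i` and `β b = J α`, the pair `(α, β)` is an
eigenvector of it with eigenvalue `(1 - 2/B) + (2b/B) J`, which is `cos 2θ' + J sin 2θ'` because
`sin θ' = 1/√B` and `cos θ' = b/√B`. -/

theorem Complex.exp_two_mul_I_mul_arcsin {x : ℝ} (hx₁ : -1 ≤ x) (hx₂ : x ≤ 1) :
    exp (2 * I * arcsin x) = ((1 - 2 * x ^ 2 : ℝ) : ℂ) + ((2 * x * √(1 - x ^ 2) : ℝ) : ℂ) * I := by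
  have hsin : Real.sin (arcsin x) = x := sin_arcsin hx₁ hx₂
  have hcos : Real.cos (arcsin x) ^ 2 = 1 - x ^ 2 := by
    rw [cos_arcsin, sq_sqrt (by nlinarith)]
  rw [show 2 * I * (arcsin x : ℂ) = ((2 * arcsin x : ℝ) : ℂ) * I by push_cast; ring,
    exp_mul_I, ← ofReal_cos, ← ofReal_sin, Real.cos_two_mul', Real.sin_two_mul, hsin, hcos,
    cos_arcsin]
  ring_nf

theorem Complex.exp_two_mul_I_mul_arcsin_inv_sqrt {B : ℝ} (hB : 1 ≤ B) :
    exp (2 * I * arcsin (1 / √B)) = (1 - 2 / B) + 2 * √(B - 1) / B * I := by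
  have hsq : (1 / √B) ^ 2 = 1 / B := by rw [div_pow, one_pow, sq_sqrt (by linarith)]
  have hroot : 1 / √B * √(1 - 1 / B) = √(B - 1) / B := by
    rw [one_sub_div (by positivity), sqrt_div (by linarith)]
    field_simp
    rw [sq_sqrt (by linarith)]
  have hx₂ : 1 / √B ≤ 1 := by
    rw [div_le_one (by positivity)]; exact one_le_sqrt.mpr hB
  rw [Complex.exp_two_mul_I_mul_arcsin (by linarith [show 0 ≤ 1 / √B by positivity]) hx₂, hsq,
    mul_assoc, hroot]
  push_cast
  ring

theorem Complex.exp_neg_two_mul_I_mul_arcsin_inv_sqrt {B : ℝ} (hB : 1 ≤ B) :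
    exp (-(2 * I * arcsin (1 / √B))) = (1 - 2 / B) + 2 * √(B - 1) / B * -I := by
  have h := congrArg (starRingEnd ℂ) (exp_two_mul_I_mul_arcsin_inv_sqrt hB)
  rw [← exp_conj] at h
  simpa [map_ofNat] using h

section GroverOperators

variable {ι κ : Type*} [DecidableEq ι] [DecidableEq κ]

def phaseFlip (i₀ : ι) (ψ : ι → ℂ) : ι → ℂ :=
  fun i => if i = i₀ then -ψ i else ψ i

noncomputable def localDiffusion [Fintype κ] (ψ : ι × κ → ℂ) : ι × κ → ℂ :=
  fun i => (2 / (Fintype.card κ : ℂ)) * ∑ k, ψ (i.1, k) - ψ i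

def blockVector (i₀ : ι) (k₀ : κ) (α β : ℂ) : ι × κ → ℂ :=
  fun i => if i.1 = i₀ then (if i.2 = k₀ then α else β) else 0

theorem blockVector_smul (i₀ : ι) (k₀ : κ) (c α β : ℂ) :
    c • blockVector i₀ k₀ α β = blockVector i₀ k₀ (c * α) (c * β) := by
  funext ⟨i, k⟩
  by_cases hi : i = i₀ <;> by_cases hk : k = k₀ <;> simp [blockVector, hi, hk]

theorem phaseFlip_blockVector (i₀ : ι) (k₀ : κ) (α β : ℂ) :
    phaseFlip (i₀, k₀) (blockVector i₀ k₀ α β) = blockVector i₀ k₀ (-α) β := by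
  funext ⟨i, k⟩
  by_cases hi : i = i₀ <;> by_cases hk : k = k₀ <;> simp [phaseFlip, blockVector, hi, hk]

theorem Fintype.sum_ite_eq_add_card_sub_one_mul [Fintype κ] (k₀ : κ) (α β : ℂ) :
    ∑ k, (if k = k₀ then α else β) = α + (Fintype.card κ - 1) * β := by
  have h : ∀ k, (if k = k₀ then α else β) = β + if k = k₀ then α - β else 0 := by
    intro k; split_ifs <;> ring
  simp only [h, sum_add_distrib, sum_ite_eq', sum_const, card_univ, nsmul_eq_mul]
  ring

theorem localDiffusion_blockVector [Fintype κ] (i₀ : ι) (k₀ : κ) (α β : ℂ) :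
    localDiffusion (blockVector i₀ k₀ α β) =
      blockVector i₀ k₀
        (2 / (Fintype.card κ : ℂ) * (α + (Fintype.card κ - 1) * β) - α)
        (2 / (Fintype.card κ : ℂ) * (α + (Fintype.card κ - 1) * β) - β) := by
  funext ⟨i, k⟩
  by_cases hi : i = i₀
  · by_cases hk : k = k₀ <;>
      simp [localDiffusion, blockVector, hi, hk, Fintype.sum_ite_eq_add_card_sub_one_mul]
  · simp [localDiffusion, blockVector, hi]

theorem localDiffusion_phaseFlip_blockVector [Fintype κ] [Nonempty κ] (i₀ : ι) (k₀ : κ)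
    {α β b J : ℂ} (hb : b ^ 2 = Fintype.card κ - 1) (hJ : J ^ 2 = -1) (hβ : β * b = J * α) :
    localDiffusion (phaseFlip (i₀, k₀) (blockVector i₀ k₀ α β)) =
      ((1 - 2 / (Fintype.card κ : ℂ)) + 2 * b / Fintype.card κ * J) •
        blockVector i₀ k₀ α β := by
  have hB : (Fintype.card κ : ℂ) ≠ 0 := by exact_mod_cast Fintype.card_ne_zero
  rw [phaseFlip_blockVector, localDiffusion_blockVector, blockVector_smul]
  congr 1
  · field_simp
    linear_combination 2 * b * hβ - 2 * β * hb
  · field_simp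
    linear_combination -2 * J * hβ - 2 * α * hJ

end GroverOperators

theorem stmt_12_general (A B : ℕ) (hB : 2 ≤ B)
    (tstar : Fin A) (t' : Fin B)
    (U : (Fin A × Fin B → ℂ) → (Fin A × Fin B → ℂ))
    (hU : ∀ ψ i, U ψ i = if i = (tstar, t') then -ψ i else ψ i)
    (Dloc : (Fin A × Fin B → ℂ) → (Fin A × Fin B → ℂ))
    (hDloc : ∀ ψ u v, Dloc ψ (u, v) = (2 / (B : ℂ)) * (∑ v' : Fin B, ψ (u, v')) - ψ (u, v))
    (G₃ : (Fin A × Fin B → ℂ) → (Fin A × Fin B → ℂ)) (hG₃ : G₃ = Dloc ∘ U)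
    (θ' : ℝ) (hθ' : θ' = Real.arcsin (1 / Real.sqrt B))
    (ψp ψm : Fin A × Fin B → ℂ)
    (hψp : ∀ u v, ψp (u, v) =
      if u = tstar then
        (if v = t' then ((1 / Real.sqrt 2 : ℝ) : ℂ)
          else Complex.I / ((Real.sqrt 2 : ℝ) * (Real.sqrt ((B : ℝ) - 1) : ℝ)))
      else 0)
    (hψm : ∀ u v, ψm (u, v) =
      if u = tstar then
        (if v = t' then ((1 / Real.sqrt 2 : ℝ) : ℂ)
          else -(Complex.I / ((Real.sqrt 2 : ℝ) * (Real.sqrt ((B : ℝ) - 1) : ℝ))))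
      else 0) :
    (∀ i, G₃ ψp i = Complex.exp (2 * Complex.I * θ') * ψp i) ∧
    (∀ i, G₃ ψm i = Complex.exp (-(2 * Complex.I * θ')) * ψm i) := by
  have hB2 : (2 : ℝ) ≤ B := by exact_mod_cast hB
  have hB1 : (1 : ℝ) ≤ B := by linarith
  have : Nonempty (Fin B) := ⟨t'⟩
  set b : ℂ := ((√((B : ℝ) - 1) : ℝ) : ℂ)
  have hb : b ^ 2 = (Fintype.card (Fin B) : ℂ) - 1 := by
    rw [Fintype.card_fin, ← ofReal_pow, sq_sqrt (by linarith)]; push_cast; ring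
  have hb0 : b ≠ 0 := ofReal_ne_zero.mpr (sqrt_pos.mpr (by linarith)).ne'
  have hG : G₃ = localDiffusion ∘ phaseFlip (tstar, t') := by
    rw [hG₃, show U = phaseFlip (tstar, t') from funext fun ψ => funext (hU ψ),
      show Dloc = localDiffusion from funext fun ψ => funext fun ⟨u, v⟩ => by
        simp [hDloc, localDiffusion]]
  have hp : ψp = blockVector tstar t' _ _ := funext fun ⟨u, v⟩ => hψp u v
  have hm : ψm = blockVector tstar t' _ _ := funext fun ⟨u, v⟩ => hψm u v
  have eigen := fun (J : ℂ) (hJ : J ^ 2 = -1) β (hβ : β * b = J * ((1 / √2 : ℝ) : ℂ)) =>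
    localDiffusion_phaseFlip_blockVector tstar t' hb hJ hβ
  rw [Fintype.card_fin] at eigen
  constructor
  · intro i
    rw [hG, hp, Function.comp_apply, eigen I (by simp) _ (by push_cast; field_simp), hθ',
      exp_two_mul_I_mul_arcsin_inv_sqrt hB1]
    push_cast
    rfl
  · intro i
    rw [hG, hm, Function.comp_apply, eigen (-I) (by simp) _ (by push_cast; field_simp), hθ',
      exp_neg_two_mul_I_mul_arcsin_inv_sqrt hB1]
    push_cast
    rfl

/-- Eigenvalue–eigenvector computation for the local Grover iterate (Appendix F of the paper). -/
theorem stmt_12 (A B : ℕ) (hA : 2 ≤ A) (hB : 2 ≤ B) (N : ℕ) (hN : N = A * B)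
    (tstar : Fin A) (t' : Fin B)
    (U : (Fin A × Fin B → ℂ) → (Fin A × Fin B → ℂ))
    (hU : ∀ ψ i, U ψ i = if i = (tstar, t') then -ψ i else ψ i)
    (Dloc : (Fin A × Fin B → ℂ) → (Fin A × Fin B → ℂ))
    (hDloc : ∀ ψ u v, Dloc ψ (u, v) = (2 / (B : ℂ)) * (∑ v' : Fin B, ψ (u, v')) - ψ (u, v))
    (G₃ : (Fin A × Fin B → ℂ) → (Fin A × Fin B → ℂ)) (hG₃ : G₃ = Dloc ∘ U)
    (θ' : ℝ) (hθ' : θ' = Real.arcsin (1 / Real.sqrt B))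
    (ψp ψm : Fin A × Fin B → ℂ)
    (hψp : ∀ u v, ψp (u, v) =
      if u = tstar then
        (if v = t' then ((1 / Real.sqrt 2 : ℝ) : ℂ)
          else Complex.I / ((Real.sqrt 2 : ℝ) * (Real.sqrt ((B : ℝ) - 1) : ℝ)))
      else 0)
    (hψm : ∀ u v, ψm (u, v) =
      if u = tstar then
        (if v = t' then ((1 / Real.sqrt 2 : ℝ) : ℂ)
          else -(Complex.I / ((Real.sqrt 2 : ℝ) * (Real.sqrt ((B : ℝ) - 1) : ℝ))))
      else 0) :
    (∀ i, G₃ ψp i = Complex.exp (2 * Complex.I * θ') * ψp i) ∧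
    (∀ i, G₃ ψm i = Complex.exp (-(2 * Complex.I * θ')) * ψm i) :=
  stmt_12_general A B hB tstar t' U hU Dloc hDloc G₃ hG₃ θ' hθ' ψp ψm hψp hψm
end

section
/- Let N ≥ 2 and B ≥ 2 be natural numbers with B < N, and let a, a', C, θ, φ be real numbers. Set E = √(B−1)·a' + (N−B)·C/√(N−1) and F = C/√(N−1). If a ≠ 0, sin(θ/2) ≠ 0, cos(φ + θ/2) = −E·cos(θ/2)/a, and sin(φ + θ/2) = ((cos θ − 1)·E + N·F)/(2·a·sin(θ/2)), then in the complex numbers a·(1 − e^{iθ})·e^{iφ}/N + a'·(B−1)·(1 − e^{iθ})/(N·√(B−1)) + C·(N−B)·(1 − e^{iθ})/(N·√(N−1)) − C/√(N−1) = 0. -/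
/-!
With `ψ = φ + θ/2`, the identity `1 - e^{iθ} = -2i sin(θ/2) e^{iθ/2}` turns the first term into
`-2i a sin(θ/2) e^{iψ}/N`, whose real and imaginary parts are fixed by the two angle conditions,
while the other two terms add up to `(1 - e^{iθ}) E/N` because `(B-1)/√(B-1) = √(B-1)`.
The conditions are exactly what makes `(1 - e^{iθ})(a e^{iφ} + E) = N F`, so the sum is `F - F = 0`.
-/

theorem one_sub_exp_I_mul (θ : ℝ) :
    1 - Complex.exp (Complex.I * θ) =
      -2 * Complex.I * (Real.sin (θ / 2) : ℂ) * Complex.exp (Complex.I * (θ / 2 : ℝ)) := by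
  have hθ : Complex.I * θ = (θ / 2 : ℝ) * Complex.I + (θ / 2 : ℝ) * Complex.I := by push_cast; ring
  rw [hθ, Complex.exp_add, mul_comm Complex.I, Complex.exp_mul_I]
  push_cast
  linear_combination -Complex.sin_sq_add_cos_sq (θ / 2 : ℂ) + Complex.sin (θ / 2) ^ 2 * Complex.I_sq

theorem one_sub_exp_mul_add_eq (a E G θ φ : ℝ)
    (hcos : a * Real.cos (φ + θ / 2) = -E * Real.cos (θ / 2))
    (hsin : 2 * a * Real.sin (θ / 2) * Real.sin (φ + θ / 2) = (Real.cos θ - 1) * E + G) :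
    (1 - Complex.exp (Complex.I * θ)) * (a * Complex.exp (Complex.I * φ) + E) = G := by
  have hψ : Complex.exp (Complex.I * (θ / 2 : ℝ)) * Complex.exp (Complex.I * φ) =
      Complex.cos (φ + θ / 2 : ℝ) + Complex.sin (φ + θ / 2 : ℝ) * Complex.I := by
    rw [← Complex.exp_add, ← Complex.exp_mul_I]; push_cast; ring_nf
  have hθ : Complex.exp (Complex.I * θ) = Complex.cos θ + Complex.sin θ * Complex.I := by
    rw [← Complex.exp_mul_I, mul_comm]
  have hsin2 : Complex.sin θ = 2 * Complex.sin (θ / 2 : ℝ) * Complex.cos (θ / 2 : ℝ) := by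
    push_cast; rw [← Complex.sin_two_mul]; ring_nf
  have hcos' := congrArg ((↑) : ℝ → ℂ) hcos
  have hsin' := congrArg ((↑) : ℝ → ℂ) hsin
  push_cast at hcos' hsin' hψ hsin2 ⊢
  calc (1 - Complex.exp (Complex.I * θ)) * (a * Complex.exp (Complex.I * φ) + E)
      = -2 * Complex.I * Complex.sin (θ / 2) * a *
          (Complex.exp (Complex.I * (θ / 2)) * Complex.exp (Complex.I * φ)) +
        E * (1 - Complex.exp (Complex.I * θ)) := by rw [one_sub_exp_I_mul]; push_cast; ring
    _ = G := by
      rw [hψ, hθ, hsin2]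
      linear_combination (-2 * Complex.I * Complex.sin (θ / 2)) * hcos' + hsin'
        - 2 * Complex.sin (θ / 2) * a * Complex.sin (φ + θ / 2) * Complex.I_sq

theorem stmt_13_general (N B : ℕ) (hN : 2 ≤ N)
    (a a' C θ φ : ℝ)
    (E F : ℝ)
    (hE : E = Real.sqrt ((B : ℝ) - 1) * a' + ((N : ℝ) - B) * C / Real.sqrt ((N : ℝ) - 1))
    (hF : F = C / Real.sqrt ((N : ℝ) - 1))
    (ha : a ≠ 0) (hs : Real.sin (θ / 2) ≠ 0)
    (hcos : Real.cos (φ + θ / 2) = -E * Real.cos (θ / 2) / a)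
    (hsin : Real.sin (φ + θ / 2) =
      ((Real.cos θ - 1) * E + N * F) / (2 * a * Real.sin (θ / 2))) :
    (a : ℂ) * (1 - Complex.exp (Complex.I * θ)) * Complex.exp (Complex.I * φ) / (N : ℂ) +
        (a' : ℂ) * ((B : ℂ) - 1) * (1 - Complex.exp (Complex.I * θ)) /
          ((N : ℂ) * (Real.sqrt ((B : ℝ) - 1) : ℝ)) +
        (C : ℂ) * ((N : ℂ) - B) * (1 - Complex.exp (Complex.I * θ)) /
          ((N : ℂ) * (Real.sqrt ((N : ℝ) - 1) : ℝ)) -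
        (C : ℂ) / (Real.sqrt ((N : ℝ) - 1) : ℝ) = 0 := by
  have hN0 : (N : ℂ) ≠ 0 := Nat.cast_ne_zero.mpr (by omega)
  have key := one_sub_exp_mul_add_eq a E (N * F) θ φ
    (by rw [hcos]; field_simp) (by rw [hsin]; field_simp)
  have hdiv : ((B : ℂ) - 1) / (Real.sqrt ((B : ℝ) - 1) : ℝ) = (Real.sqrt ((B : ℝ) - 1) : ℝ) := by
    exact_mod_cast congrArg ((↑) : ℝ → ℂ) Real.div_sqrt
  subst hE hF
  push_cast at key
  linear_combination (N : ℂ)⁻¹ * key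
    + (N : ℂ)⁻¹ * a' * (1 - Complex.exp (Complex.I * θ)) * hdiv
    + (C / (Real.sqrt ((N : ℝ) - 1) : ℝ)) * mul_inv_cancel₀ hN0

/-- Lemma 5 of the paper: the non-target block amplitude after the generalized Grover
operator G₄ vanishes under the stated angle conditions. -/
theorem stmt_13 (N B : ℕ) (hN : 2 ≤ N) (hB : 2 ≤ B) (hBN : B < N)
    (a a' C θ φ : ℝ)
    (E F : ℝ)
    (hE : E = Real.sqrt ((B : ℝ) - 1) * a' + ((N : ℝ) - B) * C / Real.sqrt ((N : ℝ) - 1))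
    (hF : F = C / Real.sqrt ((N : ℝ) - 1))
    (ha : a ≠ 0) (hs : Real.sin (θ / 2) ≠ 0)
    (hcos : Real.cos (φ + θ / 2) = -E * Real.cos (θ / 2) / a)
    (hsin : Real.sin (φ + θ / 2) =
      ((Real.cos θ - 1) * E + N * F) / (2 * a * Real.sin (θ / 2))) :
    (a : ℂ) * (1 - Complex.exp (Complex.I * θ)) * Complex.exp (Complex.I * φ) / (N : ℂ) +
        (a' : ℂ) * ((B : ℂ) - 1) * (1 - Complex.exp (Complex.I * θ)) /
          ((N : ℂ) * (Real.sqrt ((B : ℝ) - 1) : ℝ)) +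
        (C : ℂ) * ((N : ℂ) - B) * (1 - Complex.exp (Complex.I * θ)) /
          ((N : ℂ) * (Real.sqrt ((N : ℝ) - 1) : ℝ)) -
        (C : ℂ) / (Real.sqrt ((N : ℝ) - 1) : ℝ) = 0 :=
  stmt_13_general N B hN a a' C θ φ E F hE hF ha hs hcos hsin
end

section
/- Let n, k, p be natural numbers with p ≥ 4 and n − p − k ≥ 7, and set m = n − k and B = 2^{n−p−k}. Define θ' = arcsin(1/√B), γ_p = (√(2^p)/2)·arctan(√(3·2^p − 4)/(2^p − 2)), η_p = arcsin(√(2^p/(4·(2^p − 1)))), and the (nearest-integer) rounded iteration numbers p₁ = round((π/4)·√(2^m) − γ_p·√B) and p₂ = round(η_p·√B). Then p₁·(16m − 10) + p₂·(16m − 8p − 10) + (16m − 10) > (⌊(π/2 − θ')/(2θ')⌋ + 1)·(16(m − p) − 10). -/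
/-!
Since `sin x ≤ x`, `θ' ≥ 1 / √B`, so the number of second-stage iterations is at most
`π √B / 4 + 1 / 2`. On the other side `p₁ + p₂ ≥ √B (π √(2^p) / 4 - γ_p + η_p) - 1`, and the
bounds `γ_p ≤ 1` (from `arctan x ≤ x`) and `η_p ≥ π / 6` put this well above `π √B / 4 + 1 / 2`.
As every first-stage query is at least as deep as a second-stage one, the first stage is deeper.
-/

open Real

lemma Real.arctan_le_self {x : ℝ} (hx : 0 ≤ x) : arctan x ≤ x :=
  calc arctan x ≤ tan (arctan x) := le_tan (arctan_nonneg.2 hx) (arctan_lt_pi_div_two x)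
    _ = x := tan_arctan x

lemma Real.self_le_arcsin {x : ℝ} (hx₀ : 0 ≤ x) (hx₁ : x ≤ 1) : x ≤ arcsin x :=
  (le_arcsin_iff_sin_le' ⟨by linarith [pi_gt_three], by linarith [pi_gt_three]⟩).2 (sin_le hx₀)

lemma sqrt_div_two_mul_arctan_le_one {P : ℝ} (hP : 12 ≤ P) :
    √P / 2 * arctan (√(3 * P - 4) / (P - 2)) ≤ 1 := by
  have hden : 0 < P - 2 := by linarith
  calc √P / 2 * arctan (√(3 * P - 4) / (P - 2))
      ≤ √P / 2 * (√(3 * P - 4) / (P - 2)) := by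
        gcongr
        exact arctan_le_self (by positivity)
    _ = √(P * (3 * P - 4)) / (2 * (P - 2)) := by
        rw [sqrt_mul (by linarith)]
        field_simp
    _ ≤ 1 := by
        rw [div_le_one (by positivity), sqrt_le_left (by positivity)]
        nlinarith

lemma pi_div_six_le_arcsin_sqrt {P : ℝ} (hP : 1 < P) :
    π / 6 ≤ arcsin √(P / (4 * (P - 1))) := by
  rw [le_arcsin_iff_sin_le' ⟨by linarith [pi_pos], by linarith [pi_pos]⟩, sin_pi_div_six,
    le_sqrt (by norm_num) (by positivity), le_div_iff₀ (by linarith)]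
  linarith

lemma div_two_arcsin_inv_le {b : ℝ} (hb : 1 ≤ b) :
    (π / 2 - arcsin (1 / b)) / (2 * arcsin (1 / b)) ≤ π * b / 4 - 1 / 2 := by
  have hinv : 1 / b ≤ arcsin (1 / b) :=
    self_le_arcsin (by positivity) ((div_le_one (by linarith)).2 hb)
  have hθ : 0 < arcsin (1 / b) := lt_of_lt_of_le (by positivity) hinv
  have hbθ : 1 ≤ b * arcsin (1 / b) := by rwa [div_le_iff₀' (by linarith)] at hinv
  rw [div_le_iff₀ (by positivity)]
  nlinarith [pi_pos]

lemma depth_lt_of_add_one_le {f a b m p : ℝ} (hab : f + 1 ≤ a + b) (ha : 0 ≤ a) (hb : 0 ≤ b)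
    (hp : 0 ≤ p) (hpm : p + 1 ≤ m) :
    (f + 1) * (16 * (m - p) - 10) <
      a * (16 * m - 10) + b * (16 * m - 8 * p - 10) + (16 * m - 10) := by
  nlinarith [mul_le_mul_of_nonneg_right hab (by linarith : (0 : ℝ) ≤ 16 * (m - p) - 10),
    mul_nonneg ha hp, mul_nonneg hb hp]

/-- Quantitative content of Theorem 2 of the paper: the total circuit depth of the first
stage of the IDGS algorithm exceeds that of its second stage. -/
theorem stmt_14 (n k p : ℕ) (hp : 4 ≤ p) (hn : 7 ≤ n - p - k)
    (m B : ℕ) (hm : m = n - k) (hB : B = 2 ^ (n - p - k))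
    (θ' γp ηp : ℝ)
    (hθ' : θ' = Real.arcsin (1 / Real.sqrt B))
    (hγ : γp = Real.sqrt (2 ^ p) / 2 *
      Real.arctan (Real.sqrt (3 * (2 : ℝ) ^ p - 4) / ((2 : ℝ) ^ p - 2)))
    (hη : ηp = Real.arcsin (Real.sqrt ((2 : ℝ) ^ p / (4 * ((2 : ℝ) ^ p - 1)))))
    (p₁ p₂ : ℤ)
    (hp₁ : p₁ = round (Real.pi / 4 * Real.sqrt (2 ^ m) - γp * Real.sqrt B))
    (hp₂ : p₂ = round (ηp * Real.sqrt B)) :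
    (p₁ : ℝ) * (16 * m - 10) + (p₂ : ℝ) * (16 * m - 8 * p - 10) + (16 * (m : ℝ) - 10) >
      ((⌊(Real.pi / 2 - θ') / (2 * θ')⌋ : ℝ) + 1) * (16 * ((m : ℝ) - p) - 10) := by
  have hP : (16 : ℝ) ≤ 2 ^ p :=
    calc (16 : ℝ) = 2 ^ 4 := by norm_num
      _ ≤ 2 ^ p := pow_le_pow_right₀ one_le_two hp
  have hs : 4 ≤ √(2 ^ p) := (le_sqrt (by norm_num) (by positivity)).2 (by linarith)
  have hb : 1 ≤ √B := one_le_sqrt.2 (by exact_mod_cast hB ▸ Nat.one_le_two_pow)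
  have hsqrt : √(2 ^ m) = √(2 ^ p) * √B := by
    rw [← sqrt_mul (by positivity), hB, hm, Nat.cast_pow, Nat.cast_ofNat, ← pow_add]
    congr 2
    omega
  have hγp : γp ≤ 1 := hγ ▸ sqrt_div_two_mul_arctan_le_one (by linarith)
  have hηp : π / 6 ≤ ηp := hη ▸ pi_div_six_le_arcsin_sqrt (by linarith)
  have hθ'B := hθ' ▸ div_two_arcsin_inv_le hb
  have h₁ := hsqrt ▸ hp₁ ▸ sub_half_lt_round (π / 4 * √(2 ^ m) - γp * √B)
  have h₂ := hp₂ ▸ sub_half_lt_round (ηp * √B)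
  have hs' := mul_le_mul_of_nonneg_right hs (zero_le_one.trans hb)
  have hγ' := mul_le_mul_of_nonneg_right hγp (zero_le_one.trans hb)
  have hη' := mul_le_mul_of_nonneg_right hηp (zero_le_one.trans hb)
  have hp₁₀ : (0 : ℝ) ≤ p₁ := by nlinarith [pi_gt_three]
  have hp₂₀ : (0 : ℝ) ≤ p₂ := by nlinarith [pi_gt_three]
  have hlt : (π / 2 - θ') / (2 * θ') < p₁ + p₂ := by nlinarith [pi_gt_three]
  have hfloor : (⌊(π / 2 - θ') / (2 * θ')⌋ : ℝ) + 1 ≤ p₁ + p₂ := by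
    exact_mod_cast Int.add_one_le_iff.2 (Int.floor_lt.2 (by exact_mod_cast hlt))
  exact depth_lt_of_add_one_le hfloor hp₁₀ hp₂₀ (Nat.cast_nonneg p)
    (by exact_mod_cast (by omega : p + 1 ≤ m))
end

section
/- The function f : ℝ → ℝ defined by f(x) = π/4 + arcsin(√(x/(4·(x−1))))/√x − (1/2)·arctan(√(3x−4)/(x−2)) is strictly increasing on the interval [16, ∞). -/
/-!
On `(2, ∞)` the derivative is
`f' x = √(3x - 4) / (4x(x - 1)) - arcsin √(x / (4(x - 1))) / (2x√x)`. Since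
`arcsin u = arctan (u / √(1 - u²)) ≤ u / √(1 - u²)`, the arcsin here is at most `√x / √(3x - 4)`,
so the second term is at most `1 / (2x√(3x - 4))`; this is smaller than the first term exactly
when `2(x - 1) < 3x - 4`, i.e. `x > 2`.
-/

open Real Set

lemma Real.arcsin_le_div_sqrt_one_sub_sq {x : ℝ} (h₀ : 0 ≤ x) (h₁ : x < 1) :
    arcsin x ≤ x / √(1 - x ^ 2) := by
  rw [arcsin_eq_arctan ⟨by linarith, h₁⟩]
  have hpos : 0 ≤ x / √(1 - x ^ 2) := by positivity
  simpa [tan_arctan] using le_tan (arctan_nonneg.2 hpos) (arctan_lt_pi_div_two _)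

lemma Real.sqrt_div_four_mul (a : ℝ) {c : ℝ} (hc : 0 ≤ c) : √(a / (4 * c)) = √a / (2 * √c) := by
  rw [sqrt_div' a (by positivity), sqrt_mul' 4 hc,
    show (4 : ℝ) = 2 ^ 2 by norm_num, sqrt_sq zero_le_two]

lemma one_sub_div_four_mul_sub_one {x : ℝ} (hx : x ≠ 1) :
    1 - x / (4 * (x - 1)) = (3 * x - 4) / (4 * (x - 1)) := by
  have : x - 1 ≠ 0 := sub_ne_zero.2 hx
  field_simp
  ring

lemma hasDerivAt_div_four_mul_sub_one {x : ℝ} (hx : x ≠ 1) :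
    HasDerivAt (fun y => y / (4 * (y - 1))) (-1 / (4 * (x - 1) ^ 2)) x := by
  have h₁ : x - 1 ≠ 0 := sub_ne_zero.2 hx
  refine ((hasDerivAt_id x).div (((hasDerivAt_id x).sub_const 1).const_mul 4)
    (by simpa using h₁)).congr_deriv ?_
  simp only [id]
  field_simp
  ring

lemma hasDerivAt_arcsin_sqrt_div_four_mul_sub_one {x : ℝ} (hx : 4 / 3 < x) :
    HasDerivAt (fun y => arcsin √(y / (4 * (y - 1))))
      (-1 / (2 * √x * (x - 1) * √(3 * x - 4))) x := by
  have h₁ : 0 < x - 1 := by linarith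
  have hr₀ : 0 < x / (4 * (x - 1)) := by positivity
  have hu₁ : √(x / (4 * (x - 1))) < 1 := by
    rw [sqrt_lt' one_pos, one_pow, div_lt_one (by positivity)]; linarith
  have hu := (hasDerivAt_div_four_mul_sub_one (by linarith : x ≠ 1)).sqrt hr₀.ne'
  refine ((hasDerivAt_arcsin (by linarith [sqrt_nonneg (x / (4 * (x - 1)))]) hu₁.ne).comp x
    hu).congr_deriv ?_
  rw [sq_sqrt hr₀.le, one_sub_div_four_mul_sub_one (by linarith),
    sqrt_div_four_mul _ h₁.le, sqrt_div_four_mul _ h₁.le]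
  have ht2 : √(x - 1) ^ 2 = x - 1 := sq_sqrt h₁.le
  field_simp
  rw [ht2]
  ring

lemma hasDerivAt_arctan_sqrt_div_sub_two {x : ℝ} (hx : 4 / 3 < x) (hx₂ : x ≠ 2) :
    HasDerivAt (fun y => arctan (√(3 * y - 4) / (y - 2)))
      ((2 - 3 * x) / (2 * √(3 * x - 4) * x * (x - 1))) x := by
  have h₂ : x - 2 ≠ 0 := sub_ne_zero.2 hx₂
  have hw₀ : 0 < 3 * x - 4 := by linarith
  have hsqrt := (((hasDerivAt_id x).const_mul 3).sub_const 4).sqrt hw₀.ne'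
  refine (hsqrt.div ((hasDerivAt_id x).sub_const 2) h₂).arctan.congr_deriv ?_
  have hw2 : √(3 * x - 4) ^ 2 = 3 * x - 4 := sq_sqrt hw₀.le
  have h₀ : x ≠ 0 := by linarith
  have h₁ : x - 1 ≠ 0 := by linarith
  simp only [id, Pi.div_apply, div_pow, hw2]
  field_simp
  rw [hw2]
  ring

lemma arcsin_sqrt_div_four_mul_sub_one_le {x : ℝ} (hx : 4 / 3 < x) :
    arcsin √(x / (4 * (x - 1))) ≤ √x / √(3 * x - 4) := by
  have hr₀ : 0 ≤ x / (4 * (x - 1)) := div_nonneg (by linarith) (by linarith)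
  have hr₁ : x / (4 * (x - 1)) < 1 := by rw [div_lt_one (by linarith)]; linarith
  have h₁ : 0 < x - 1 := by linarith
  calc arcsin √(x / (4 * (x - 1)))
      ≤ √(x / (4 * (x - 1))) / √(1 - √(x / (4 * (x - 1))) ^ 2) :=
        arcsin_le_div_sqrt_one_sub_sq (sqrt_nonneg _) ((sqrt_lt' one_pos).2 (by rwa [one_pow]))
    _ = √x / √(3 * x - 4) := by
        rw [sq_sqrt hr₀, one_sub_div_four_mul_sub_one (by linarith),
          sqrt_div_four_mul _ h₁.le, sqrt_div_four_mul _ h₁.le]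
        field_simp

lemma hasDerivAt_arcsin_sqrt_div_four_mul_sub_one_div_sqrt {x : ℝ} (hx : 4 / 3 < x) :
    HasDerivAt (fun y => arcsin √(y / (4 * (y - 1))) / √y)
      (-1 / (2 * x * (x - 1) * √(3 * x - 4)) - arcsin √(x / (4 * (x - 1))) / (2 * x * √x)) x := by
  have hs : 0 < √x := sqrt_pos.2 (by linarith)
  refine ((hasDerivAt_arcsin_sqrt_div_four_mul_sub_one hx).div (hasDerivAt_sqrt (by linarith))
    hs.ne').congr_deriv ?_
  have h₁ : x - 1 ≠ 0 := by linarith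
  rw [sq_sqrt (by linarith)]
  field_simp

namespace Theorem2

noncomputable def f (x : ℝ) : ℝ :=
  π / 4 + arcsin √(x / (4 * (x - 1))) / √x - (1 / 2) * arctan (√(3 * x - 4) / (x - 2))

noncomputable def f' (x : ℝ) : ℝ :=
  √(3 * x - 4) / (4 * x * (x - 1)) - arcsin √(x / (4 * (x - 1))) / (2 * x * √x)

lemma hasDerivAt_f {x : ℝ} (hx : 2 < x) : HasDerivAt f (f' x) x := by
  refine (((hasDerivAt_const x (π / 4)).add
    (hasDerivAt_arcsin_sqrt_div_four_mul_sub_one_div_sqrt (by linarith))).sub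
    ((hasDerivAt_arctan_sqrt_div_sub_two (by linarith) hx.ne').const_mul (1 / 2))).congr_deriv ?_
  have hw : 0 < √(3 * x - 4) := sqrt_pos.2 (by linarith)
  have hw2 : √(3 * x - 4) ^ 2 = 3 * x - 4 := sq_sqrt (by linarith)
  have h₀ : x ≠ 0 := by linarith
  have h₁ : x - 1 ≠ 0 := by linarith
  unfold f'
  generalize √(3 * x - 4) = w at hw hw2 ⊢
  generalize arcsin √(x / (4 * (x - 1))) / (2 * x * √x) = a
  field_simp
  linear_combination (-4) * hw2

lemma f'_pos {x : ℝ} (hx : 2 < x) : 0 < f' x := by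
  rw [f', sub_pos]
  have hw : 0 < √(3 * x - 4) := sqrt_pos.2 (by linarith)
  have hw2 : √(3 * x - 4) ^ 2 = 3 * x - 4 := sq_sqrt (by linarith)
  calc arcsin √(x / (4 * (x - 1))) / (2 * x * √x)
      ≤ √x / √(3 * x - 4) / (2 * x * √x) := by
        gcongr
        exact arcsin_sqrt_div_four_mul_sub_one_le (by linarith)
    _ = 1 / (2 * x * √(3 * x - 4)) := by field_simp
    _ < √(3 * x - 4) / (4 * x * (x - 1)) := by
        rw [div_lt_div_iff₀ (by positivity) (by nlinarith)]
        nlinarith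

theorem strictMonoOn_f : StrictMonoOn f (Ioi 2) := by
  refine strictMonoOn_of_hasDerivWithinAt_pos (f' := f') (convex_Ioi 2)
    (fun x hx => (hasDerivAt_f hx).continuousAt.continuousWithinAt) ?_ ?_ <;> rw [interior_Ioi]
  · exact fun x hx => (hasDerivAt_f hx).hasDerivWithinAt
  · exact fun x hx => f'_pos hx

end Theorem2

/-- Monotonicity claim used in the proof of Theorem 2 of the paper. -/
theorem stmt_15 :
    StrictMonoOn (fun x : ℝ =>
        Real.pi / 4 + Real.arcsin (Real.sqrt (x / (4 * (x - 1)))) / Real.sqrt x -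
          (1 / 2) * Real.arctan (Real.sqrt (3 * x - 4) / (x - 2)))
      (Set.Ici (16 : ℝ)) :=
  Theorem2.strictMonoOn_f.mono (Ici_subset_Ioi.2 (by norm_num))
end

section
/- For every natural number p ≥ 4, setting γ_p = (√(2^p)/2)·arctan(√(3·2^p − 4)/(2^p − 2)) and η_p = arcsin(√(2^p/(4·(2^p − 1)))), one has π/4 + (η_p − γ_p)/√(2^p) ≥ 0.699, and moreover π/4 + (η_p − γ_p)/√(2^p) − π/(4·√(2^p)) > 1/2. -/
/-!
For `p ≥ 5` crude estimates suffice: `arcsin y ≥ y ≥ 1/2` and `arctan t ≤ t ≤ 1.85 / √(2 ^ p)`.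
For `p = 4` the margin is only about `10⁻³`, so the angles are computed exactly:
`η₄ = arctan (2 / √11)` and `γ₄ = 2 arctan (√11 / 7)`, and the addition formula for `arctan`
collapses `γ₄ - η₄` to `arctan (13 / (11 √11))`, which is below `0.345` because
`sin 0.345 > 0.338`.
-/

open Real

noncomputable def depthCoeff (x : ℝ) : ℝ :=
  π / 4 + (arcsin √(x / (4 * (x - 1))) - √x / 2 * arctan (√(3 * x - 4) / (x - 2))) / √x

lemma depthCoeff_eq {x : ℝ} (hx : 0 < x) :
    depthCoeff x =
      π / 4 + arcsin √(x / (4 * (x - 1))) / √x - arctan (√(3 * x - 4) / (x - 2)) / 2 := by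
  have hs : √x ≠ 0 := (sqrt_pos.2 hx).ne'
  rw [depthCoeff]
  field_simp
  ring

namespace Real

lemma arctan_le_self_s16 {t : ℝ} (ht : 0 ≤ t) : arctan t ≤ t :=
  calc arctan t ≤ tan (arctan t) := le_tan (arctan_nonneg.2 ht) (arctan_lt_pi_div_two t)
    _ = t := tan_arctan t

lemma self_le_arcsin_s16 {y : ℝ} (h₀ : 0 ≤ y) (h₁ : y ≤ 1) : y ≤ arcsin y := by
  simpa only [sin_arcsin (by linarith) h₁] using sin_le (arcsin_nonneg.2 h₀)

lemma arctan_le_of_sq_le_sin_sq_mul {t c : ℝ} (hc₀ : 0 ≤ c) (hc : c < π / 2)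
    (h : t ^ 2 ≤ sin c ^ 2 * (1 + t ^ 2)) : arctan t ≤ c := by
  have hsin : 0 ≤ sin c := sin_nonneg_of_nonneg_of_le_pi hc₀ (by linarith [pi_pos])
  rw [arctan_eq_arcsin, arcsin_le_iff_le_sin' ⟨by linarith, hc⟩,
    div_le_iff₀ (sqrt_pos.2 (by positivity))]
  calc t ≤ √(t ^ 2) := by rw [sqrt_sq_eq_abs]; exact le_abs_self t
    _ ≤ √(sin c ^ 2 * (1 + t ^ 2)) := sqrt_le_sqrt h
    _ = sin c * √(1 + t ^ 2) := by rw [sqrt_mul (sq_nonneg _), sqrt_sq hsin]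

end Real

lemma arcsin_sqrt_sixteen_eq : arcsin √(16 / (4 * (16 - 1))) = arctan (2 / √11) := by
  have hv : √11 ^ 2 = 11 := sq_sqrt (by norm_num)
  rw [arctan_eq_arcsin]
  congr 1
  rw [sqrt_eq_iff_eq_sq (by norm_num) (by positivity), div_pow, div_pow, hv,
    sq_sqrt (by positivity)]
  norm_num

lemma arctan_sqrt_forty_four_eq : arctan (√(3 * 16 - 4) / (16 - 2)) = arctan (√11 / 7) := by
  have h44 : √(3 * 16 - 4) = 2 * √11 := by
    rw [show (3 * 16 - 4 : ℝ) = 2 ^ 2 * 11 by norm_num, sqrt_mul (by norm_num),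
      sqrt_sq (by norm_num)]
  rw [h44]
  ring_nf

lemma two_mul_arctan_sub_arctan_sqrt_eleven :
    2 * arctan (√11 / 7) - arctan (2 / √11) = arctan (13 / (11 * √11)) := by
  have hv : √11 ^ 2 = 11 := sq_sqrt (by norm_num)
  have hv₀ : 0 < √11 := by positivity
  have hv₇ : √11 < 7 := by nlinarith
  rw [two_mul_arctan (by linarith [div_pos hv₀ (by norm_num : (0:ℝ) < 7)]) (by linarith),
    div_pow, hv, sub_eq_add_neg, ← arctan_neg, arctan_add]
  · congr 1
    field_simp
    linear_combination 154 * hv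
  · field_simp
    nlinarith

lemma depthCoeff_sixteen : depthCoeff 16 = π / 4 - arctan (13 / (11 * √11)) / 4 := by
  have h4 : √16 = 4 := by
    rw [show (16 : ℝ) = 4 ^ 2 by norm_num, sqrt_sq (by norm_num)]
  rw [depthCoeff_eq (by norm_num), arcsin_sqrt_sixteen_eq, arctan_sqrt_forty_four_eq, h4,
    ← two_mul_arctan_sub_arctan_sqrt_eleven]
  ring

lemma arctan_thirteen_div_le : arctan (13 / (11 * √11)) ≤ 0.345 := by
  have hv : √11 ^ 2 = 11 := sq_sqrt (by norm_num)
  have hsin : 0.338 < sin 0.345 := by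
    have := sin_gt_sub_cube (by norm_num : (0 : ℝ) < 0.345)
    norm_num at this ⊢
    linarith
  apply arctan_le_of_sq_le_sin_sq_mul (by norm_num) (by linarith [pi_gt_d2])
  rw [div_pow, mul_pow, hv]
  nlinarith

lemma pi_div_four_sub_le_depthCoeff {x : ℝ} (hx : 32 ≤ x) :
    π / 4 - 0.425 / √x ≤ depthCoeff x := by
  have hs : √x ^ 2 = x := sq_sqrt (by linarith)
  have hs₀ : 0 < √x := sqrt_pos.2 (by linarith)
  have hη : 1 / 2 ≤ arcsin √(x / (4 * (x - 1))) := by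
    have hhalf : 1 / 2 ≤ √(x / (4 * (x - 1))) := by
      rw [le_sqrt (by norm_num) (div_nonneg (by linarith) (by linarith)),
        le_div_iff₀ (by linarith)]
      linarith
    have hone : √(x / (4 * (x - 1))) ≤ 1 :=
      sqrt_le_one.2 (by rw [div_le_one (by linarith)]; linarith)
    exact hhalf.trans (self_le_arcsin_s16 (sqrt_nonneg _) hone)
  have hγ : arctan (√(3 * x - 4) / (x - 2)) ≤ 1.85 / √x := by
    refine (arctan_le_self_s16 (div_nonneg (sqrt_nonneg _) (by linarith))).trans ?_
    have hroot : √(3 * x - 4) ≤ 1.7321 * √x := by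
      rw [sqrt_le_left (by positivity)]
      nlinarith
    rw [div_le_div_iff₀ (by linarith) hs₀]
    nlinarith
  rw [depthCoeff_eq (by linarith)]
  have hηs : 1 / 2 / √x ≤ arcsin √(x / (4 * (x - 1))) / √x := by gcongr
  have hsplit : 0.425 / √x = 1.85 / √x / 2 - 1 / 2 / √x := by ring
  linarith

/-- Numerical lower bounds used in the proof of Theorem 2 of the paper. -/
theorem stmt_16 (p : ℕ) (hp : 4 ≤ p) :
    (0.699 : ℝ) ≤ Real.pi / 4 +
        (Real.arcsin (Real.sqrt ((2 : ℝ) ^ p / (4 * ((2 : ℝ) ^ p - 1)))) -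
          Real.sqrt (2 ^ p) / 2 *
            Real.arctan (Real.sqrt (3 * (2 : ℝ) ^ p - 4) / ((2 : ℝ) ^ p - 2))) /
          Real.sqrt (2 ^ p) ∧
    (1 / 2 : ℝ) < Real.pi / 4 +
        (Real.arcsin (Real.sqrt ((2 : ℝ) ^ p / (4 * ((2 : ℝ) ^ p - 1)))) -
          Real.sqrt (2 ^ p) / 2 *
            Real.arctan (Real.sqrt (3 * (2 : ℝ) ^ p - 4) / ((2 : ℝ) ^ p - 2))) /
          Real.sqrt (2 ^ p) -
        Real.pi / (4 * Real.sqrt (2 ^ p)) := by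
  change 0.699 ≤ depthCoeff (2 ^ p) ∧ 1 / 2 < depthCoeff (2 ^ p) - π / (4 * √(2 ^ p))
  have hπ := pi_gt_d4
  rcases hp.eq_or_lt with rfl | hp₅
  · have h4 : √(2 ^ 4 : ℝ) = 4 := by
      rw [show (2 ^ 4 : ℝ) = 4 ^ 2 by norm_num, sqrt_sq (by norm_num)]
    rw [h4, show (2 ^ 4 : ℝ) = 16 by norm_num, depthCoeff_sixteen]
    have hθ := arctan_thirteen_div_le
    constructor <;> linarith
  · have hx : (32 : ℝ) ≤ 2 ^ p := by
      calc (32 : ℝ) = 2 ^ 5 := by norm_num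
        _ ≤ 2 ^ p := pow_le_pow_right₀ (by norm_num) hp₅
    have hs : 5.65 ≤ √(2 ^ p : ℝ) := by
      rw [le_sqrt (by norm_num) (by positivity)]
      linarith
    have hcoeff := pi_div_four_sub_le_depthCoeff hx
    have hδ : 0.425 / √(2 ^ p : ℝ) ≤ 0.425 / 5.65 := by gcongr
    have hπs : π / (4 * √(2 ^ p : ℝ)) ≤ π / 22 := by gcongr; linarith
    constructor <;> linarith
end

section
/- For every real x > 2, one has √x·√(3x − 4) − 2·(x − 1)·arcsin(1/(2·√(1 − 1/x))) > 0. -/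
/-!
Since `x > 2`, the argument `1 / (2 √(1 - 1/x))` of `arcsin` is below `sin (π/4) = √2/2`, so the
subtracted term is less than `(π/2)(x - 1)`. On the other hand `x (3x - 4) - (π/2)² (x - 1)²` is
positive for `x ≥ 2`, because `(π/2)² < 5/2` and `x (3x - 4) - 5/2 (x - 1)² = (x² + 2x - 5)/2`.
-/

open Real

lemma arcsin_lt_pi_div_four {y : ℝ} (hy : y < √2 / 2) : arcsin y < π / 4 := by
  rwa [arcsin_lt_iff_lt_sin' ⟨by linarith [pi_pos], by linarith [pi_pos]⟩, sin_pi_div_four]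

lemma one_div_two_sqrt_lt_sqrt_two_div_two {t : ℝ} (ht : 1 / 2 < t) :
    1 / (2 * √t) < √2 / 2 := by
  have h2t : 1 < √2 * √t := by
    rw [← sqrt_mul zero_le_two]
    exact lt_sqrt_of_sq_lt (by linarith)
  rw [div_lt_div_iff₀ (by positivity) two_pos]
  linarith

lemma pi_div_two_mul_sub_one_lt_sqrt_mul_sqrt {x : ℝ} (hx : 2 ≤ x) :
    π / 2 * (x - 1) < √x * √(3 * x - 4) := by
  rw [← sqrt_mul (by linarith)]
  apply lt_sqrt_of_sq_lt
  have h_pi_sq : π ^ 2 < 10 := by nlinarith [pi_lt_d2, pi_pos]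
  calc (π / 2 * (x - 1)) ^ 2 = π ^ 2 / 4 * (x - 1) ^ 2 := by ring
    _ ≤ 5 / 2 * (x - 1) ^ 2 := by gcongr ?_ * _; linarith
    _ < x * (3 * x - 4) := by nlinarith

/-- Inequality used in the proof of Theorem 2 of the paper. -/
theorem stmt_17 (x : ℝ) (hx : 2 < x) :
    0 < Real.sqrt x * Real.sqrt (3 * x - 4) -
        2 * (x - 1) * Real.arcsin (1 / (2 * Real.sqrt (1 - 1 / x))) := by
  have h_half : 1 / 2 < 1 - 1 / x := by
    have : 1 / x < 1 / 2 := one_div_lt_one_div_of_lt two_pos hx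
    linarith
  have h_arcsin : arcsin (1 / (2 * √(1 - 1 / x))) < π / 4 :=
    arcsin_lt_pi_div_four (one_div_two_sqrt_lt_sqrt_two_div_two h_half)
  have h_sub : 2 * (x - 1) * arcsin (1 / (2 * √(1 - 1 / x))) < π / 2 * (x - 1) := by
    nlinarith
  linarith [pi_div_two_mul_sub_one_lt_sqrt_mul_sqrt hx.le]
end
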